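/- arXiv:2205.15036 — 6 statements merged into one kernel-verified Lean document; each statement's English description precedes it below -/
import Mathlib

section
/- Let R be a bipotent semifield and α₁, α₂, α₁₂ ∈ R with α₁, α₂ > 0 and α₁α₂ < α₁₂². Then the function q(λ) = α₁ + α₁₂λ + α₂λ² (sums being maxima) is constant on [0, α₁/α₁₂], equal to α₁₂λ on [α₁/α₁₂, α₁₂/α₂], and equal to α₂λ² on [α₁₂/α₂, ∞). -/
/-- In a bipotent semifield `R` with `α₁, α₂ > 0` and `α₁α₂ < α₁₂²`, the
function `q(λ) = α₁ + α₁₂λ + α₂λ²` (sums are maxima) equals `α₁` on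
`[0, α₁/α₁₂]`, equals `α₁₂λ` on `[α₁/α₁₂, α₁₂/α₂]`, and equals `α₂λ²` on
`[α₁₂/α₂, ∞)`, where `a ≤ b ↔ a + b = b`. -/
theorem stmt3 {R : Type*} [Semifield R]
    (hbip : ∀ a b : R, a + b = a ∨ a + b = b)
    (hmono : ∀ a b c : R, a + b = b → a * c + b * c = b * c)
    (α₁ α₂ α₁₂ : R) (h1 : α₁ ≠ 0) (h2 : α₂ ≠ 0)
    (hlt : α₁ * α₂ + α₁₂ ^ 2 = α₁₂ ^ 2 ∧ α₁ * α₂ ≠ α₁₂ ^ 2) :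
    (∀ lam : R, lam + α₁ / α₁₂ = α₁ / α₁₂ →
        α₁ + α₁₂ * lam + α₂ * lam ^ 2 = α₁) ∧
    (∀ lam : R, α₁ / α₁₂ + lam = lam → lam + α₁₂ / α₂ = α₁₂ / α₂ →
        α₁ + α₁₂ * lam + α₂ * lam ^ 2 = α₁₂ * lam) ∧
    (∀ lam : R, α₁₂ / α₂ + lam = lam →
        α₁ + α₁₂ * lam + α₂ * lam ^ 2 = α₂ * lam ^ 2) := by
  obtain ⟨hle, hne⟩ := hlt
  have h12 : α₁₂ ≠ 0 := by
    intro h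
    apply hne
    rw [h] at hle ⊢
    simpa using hle
  have htrans : ∀ a b c : R, a + b = b → b + c = c → a + c = c := by
    intro a b c hab hbc
    rw [← hbc, ← add_assoc, hab]
  -- α₁/α₁₂ ≤ α₁₂/α₂
  have hmid : α₁ / α₁₂ + α₁₂ / α₂ = α₁₂ / α₂ := by
    have := hmono (α₁ * α₂) (α₁₂ ^ 2) ((α₁₂ * α₂)⁻¹) hle
    rw [show α₁ * α₂ * (α₁₂ * α₂)⁻¹ = α₁ / α₁₂ by field_simp,
        show α₁₂ ^ 2 * (α₁₂ * α₂)⁻¹ = α₁₂ / α₂ by field_simp] at this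
    exact this
  refine ⟨?_, ?_, ?_⟩
  · intro lam hl
    have h12lam : α₁₂ * lam + α₁ = α₁ := by
      have := hmono lam (α₁ / α₁₂) α₁₂ hl
      rwa [div_mul_cancel₀ _ h12, mul_comm] at this
    have hl2 : lam + α₁₂ / α₂ = α₁₂ / α₂ := htrans _ _ _ hl hmid
    have ha2lam : α₂ * lam + α₁₂ = α₁₂ := by
      have := hmono lam (α₁₂ / α₂) α₂ hl2
      rwa [div_mul_cancel₀ _ h2, mul_comm] at this
    have hsq : α₂ * lam ^ 2 + α₁ = α₁ := by
      have hstep := hmono (α₂ * lam) α₁₂ lam ha2lam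
      have h' := htrans _ _ _ hstep h12lam
      rwa [show α₂ * lam * lam = α₂ * lam ^ 2 by ring] at h'
    rw [add_comm α₁ (α₁₂ * lam), h12lam, add_comm α₁ (α₂ * lam ^ 2), hsq]
  · intro lam hlo hhi
    have hx : α₁ + α₁₂ * lam = α₁₂ * lam := by
      have := hmono (α₁ / α₁₂) lam α₁₂ hlo
      rwa [div_mul_cancel₀ _ h12, mul_comm lam α₁₂] at this
    have hy : α₂ * lam ^ 2 + α₁₂ * lam = α₁₂ * lam := by
      have := hmono lam (α₁₂ / α₂) (α₂ * lam) hhi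
      rwa [show (α₁₂ / α₂) * (α₂ * lam) = α₁₂ * lam by field_simp,
           show lam * (α₂ * lam) = α₂ * lam ^ 2 by ring] at this
    rw [hx, add_comm, hy]
  · intro lam hlo
    have h2a : α₁₂ * lam + α₂ * lam ^ 2 = α₂ * lam ^ 2 := by
      have := hmono (α₁₂ / α₂) lam (α₂ * lam) hlo
      rwa [show (α₁₂ / α₂) * (α₂ * lam) = α₁₂ * lam by field_simp,
           show lam * (α₂ * lam) = α₂ * lam ^ 2 by ring] at this
    have hmid2 : α₁ / α₁₂ + lam = lam := htrans _ _ _ hmid hlo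
    have hA : α₁ + α₁₂ * lam = α₁₂ * lam := by
      have := hmono (α₁ / α₁₂) lam α₁₂ hmid2
      rwa [div_mul_cancel₀ _ h12, mul_comm lam α₁₂] at this
    have h1a : α₁ + α₂ * lam ^ 2 = α₂ * lam ^ 2 := htrans _ _ _ hA h2a
    rw [add_assoc, h2a, h1a]
end

section
/- Let R be a bipotent semifield and α₁, α₂, α₁₂ ∈ R with α₁, α₂ > 0 and α₁α₂ ≥ α₁₂². Assume R is square closed. Then for all λ ∈ R, max(α₁, α₁₂λ, α₂λ²) = max(α₁, α₂λ²); moreover this function is constant equal to α₁ on [0, √(α₁/α₂)] and equal to α₂λ² on [√(α₁/α₂), ∞). -/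
/-- In a square-closed bipotent semifield `R` with `α₁, α₂ > 0` and
`α₁α₂ ≥ α₁₂²`, one has `α₁ + α₁₂λ + α₂λ² = α₁ + α₂λ²` for all `λ`; moreover
this function equals `α₁` on `[0, √(α₁/α₂)]` and equals `α₂λ²` on
`[√(α₁/α₂), ∞)`, where `a ≤ b ↔ a + b = b`. -/
theorem stmt4 {R : Type*} [Semifield R]
    (hbip : ∀ a b : R, a + b = a ∨ a + b = b)
    (hmono : ∀ a b c : R, a + b = b → a * c + b * c = b * c)
    (hsq : ∀ a : R, ∃ b : R, b ^ 2 = a)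
    (α₁ α₂ α₁₂ : R) (h1 : α₁ ≠ 0) (h2 : α₂ ≠ 0)
    (hge : α₁₂ ^ 2 + α₁ * α₂ = α₁ * α₂) :
    (∀ lam : R, α₁ + α₁₂ * lam + α₂ * lam ^ 2 = α₁ + α₂ * lam ^ 2) ∧
    (∀ ρ : R, ρ ^ 2 = α₁ / α₂ →
      (∀ lam : R, lam + ρ = ρ → α₁ + α₁₂ * lam + α₂ * lam ^ 2 = α₁) ∧
      (∀ lam : R, ρ + lam = lam → α₁ + α₁₂ * lam + α₂ * lam ^ 2 = α₂ * lam ^ 2)) := by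
  have idem : ∀ a : R, a + a = a := fun a => (hbip a a).elim id id
  have htrans : ∀ a b c : R, a + b = b → b + c = c → a + c = c := by
    intro a b c hab hbc
    calc a + c = a + (b + c) := by rw [hbc]
    _ = (a + b) + c := by rw [add_assoc]
    _ = b + c := by rw [hab]
    _ = c := hbc
  -- squares reflect the order `a ≤ b ↔ a + b = b`
  have hrefl : ∀ x y : R, x ^ 2 + y ^ 2 = y ^ 2 → x + y = y := by
    intro x y hxy
    rcases hbip x y with h | h
    · -- case y ≤ x : show x = y
      have hyx : y + x = x := by rw [add_comm]; exact h
      have hA : x * y + x * x = x * x := by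
        have := hmono y x x hyx; rwa [mul_comm y x] at this
      have hB : y * y + x * y = x * y := hmono y x y hyx
      have hxy' : x * x + y * y = y * y := by rwa [pow_two, pow_two] at hxy
      -- y² ≤ xy ≤ x² ≤ y² gives x² = y² and xy = y²
      have hA' : y * y + x * x = x * x := htrans _ _ _ hB hA
      have hsqeq : x * x = y * y := by
        calc x * x = y * y + x * x := hA'.symm
        _ = x * x + y * y := by rw [add_comm]
        _ = y * y := hxy'
      have hxyeq : x * y = y * y := by
        have hC : x * y + y * y = y * y := by
          calc x * y + y * y = x * y + x * x := by rw [hsqeq]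
          _ = x * x := hA
          _ = y * y := hsqeq
        calc x * y = y * y + x * y := hB.symm
        _ = x * y + y * y := by rw [add_comm]
        _ = y * y := hC
      by_cases hy : y = 0
      · have hx : x = 0 := by
          have : x * x = 0 := by rw [hsqeq, hy, mul_zero]
          exact (mul_self_eq_zero).mp this
        rw [hx, hy, add_zero]
      · have : x = y := mul_right_cancel₀ hy hxyeq
        rw [this, idem]
    · exact h
  -- `a ≤ a + b` and `b ≤ a + b`
  have hle_left : ∀ a b : R, a + (a + b) = a + b := by
    intro a b; rw [← add_assoc, idem]
  have hle_right : ∀ a b : R, b + (a + b) = a + b := by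
    intro a b; rw [add_comm a b]; exact hle_left b a
  -- Part 1
  have part1 : ∀ lam : R, α₁ + α₁₂ * lam + α₂ * lam ^ 2 = α₁ + α₂ * lam ^ 2 := by
    intro lam
    set s : R := α₁ + α₂ * lam ^ 2 with hs
    -- (α₁₂ lam)² ≤ α₁ α₂ lam²
    have step1 : (α₁₂ * lam) ^ 2 + α₁ * α₂ * lam ^ 2 = α₁ * α₂ * lam ^ 2 := by
      have := hmono (α₁₂ ^ 2) (α₁ * α₂) (lam ^ 2) hge
      rw [mul_pow]; exact this
    -- α₁ α₂ lam² ≤ s²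
    have step2 : α₁ * α₂ * lam ^ 2 + s ^ 2 = s ^ 2 := by
      have ha : α₁ + s = s := hle_left α₁ (α₂ * lam ^ 2)
      have hb : α₂ * lam ^ 2 + s = s := hle_right α₁ (α₂ * lam ^ 2)
      have h1' : α₁ * (α₂ * lam ^ 2) + s * (α₂ * lam ^ 2) = s * (α₂ * lam ^ 2) :=
        hmono _ _ _ ha
      have h2' : (α₂ * lam ^ 2) * s + s * s = s * s := hmono _ _ _ hb
      have := htrans _ _ _ (by rw [mul_comm s (α₂ * lam ^ 2)] at h1'; exact h1') h2'
      calc α₁ * α₂ * lam ^ 2 + s ^ 2 = α₁ * (α₂ * lam ^ 2) + s * s := by ring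
      _ = s * s := this
      _ = s ^ 2 := by ring
    have key : α₁₂ * lam + s = s :=
      hrefl _ _ (htrans _ _ _ step1 step2)
    calc α₁ + α₁₂ * lam + α₂ * lam ^ 2 = α₁₂ * lam + s := by rw [hs]; ring
    _ = s := key
  refine ⟨part1, ?_⟩
  intro ρ hρ
  have hαρ : α₂ * ρ ^ 2 = α₁ := by
    rw [hρ, mul_div_cancel₀ _ h2]
  -- lam ≤ ρ → lam² ≤ ρ² (and symmetrically)
  have hsqmono : ∀ a b : R, a + b = b → a ^ 2 + b ^ 2 = b ^ 2 := by
    intro a b hab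
    have h1' : a * a + b * a = b * a := hmono a b a hab
    have h2' : a * b + b * b = b * b := hmono a b b hab
    have := htrans _ _ _ (by rwa [mul_comm b a] at h1') h2'
    rwa [← pow_two, ← pow_two] at this
  constructor
  · intro lam hlam
    have hsq' : lam ^ 2 + ρ ^ 2 = ρ ^ 2 := hsqmono _ _ hlam
    have : α₂ * lam ^ 2 + α₂ * ρ ^ 2 = α₂ * ρ ^ 2 := by
      have := hmono _ _ α₂ hsq'
      rwa [mul_comm (lam ^ 2) α₂, mul_comm (ρ ^ 2) α₂] at this
    rw [hαρ] at this
    calc α₁ + α₁₂ * lam + α₂ * lam ^ 2 = α₁ + α₂ * lam ^ 2 := part1 lam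
    _ = α₂ * lam ^ 2 + α₁ := by rw [add_comm]
    _ = α₁ := this
  · intro lam hlam
    have hsq' : ρ ^ 2 + lam ^ 2 = lam ^ 2 := hsqmono _ _ hlam
    have : α₂ * ρ ^ 2 + α₂ * lam ^ 2 = α₂ * lam ^ 2 := by
      have := hmono _ _ α₂ hsq'
      rwa [mul_comm (ρ ^ 2) α₂, mul_comm (lam ^ 2) α₂] at this
    rw [hαρ] at this
    calc α₁ + α₁₂ * lam + α₂ * lam ^ 2 = α₁ + α₂ * lam ^ 2 := part1 lam
    _ = α₂ * lam ^ 2 := this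
end

section
/- Let f and g be piecewise monomial functions on a closed interval [u, v] in a root-closed bipotent semifield R. Then there exists a finite sequence u = z₀ < z₁ < ⋯ < z_r = v such that on each open interval (z_{i−1}, z_i) exactly one of f < g, f = g, f > g holds everywhere. -/
section PMHelpers


lemma pm_mono_of_chain {α : Type*} [Preorder α] (f : ℕ → α) (r : ℕ)
    (h : ∀ s < r, f s < f (s + 1)) : ∀ s t, s ≤ t → t ≤ r → f s ≤ f t := by
  intro s t hst htr
  induction t with
  | zero => simp_all
  | succ n ih =>
    rcases Nat.eq_or_lt_of_le hst with h1 | h1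
    · exact le_of_eq (by rw [h1])
    · exact (ih (Nat.lt_succ_iff.mp h1) (le_of_lt htr)).trans (h n htr).le

lemma pm_find_piece {α : Type*} [LinearOrder α] (f : ℕ → α) (r : ℕ)
    (hchain : ∀ s < r, f s < f (s + 1)) (x y : α) (hx : f 0 ≤ x) (hxy : x < y)
    (hy : y ≤ f r) (hgap : ∀ s ≤ r, ¬(x < f s ∧ f s < y)) :
    ∃ s, s < r ∧ f s ≤ x ∧ y ≤ f (s + 1) := by
  classical
  set s := Nat.findGreatest (fun s => f s ≤ x) r with hs
  have hsx : f s ≤ x := Nat.findGreatest_spec (P := fun s => f s ≤ x) (Nat.zero_le r) hx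
  have hsr : s ≤ r := Nat.findGreatest_le r
  have hslt : s < r := by
    rcases lt_or_eq_of_le hsr with h | h
    · exact h
    · exact absurd ((h ▸ hsx).trans_lt hxy) (not_lt.mpr hy)
  have hnot : ¬ f (s + 1) ≤ x :=
    Nat.findGreatest_is_greatest (Nat.lt_succ_self s) hslt
  have h1 : x < f (s + 1) := not_le.mp hnot
  have h2 : y ≤ f (s + 1) := not_lt.mp fun hc => hgap (s + 1) hslt ⟨h1, hc⟩
  exact ⟨s, hslt, hsx, h2⟩

variable {R : Type*} [Semifield R] [LinearOrder R]

lemma pm_mul_lt (hmul : ∀ a b c : R, c ≠ 0 → a < b → a * c < b * c)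
    {a b c : R} (hc : c ≠ 0) : a * c < b * c ↔ a < b := by
  constructor
  · intro h
    have := hmul _ _ c⁻¹ (inv_ne_zero hc) h
    simpa [mul_assoc, mul_inv_cancel₀ hc] using this
  · exact hmul a b c hc

lemma pm_pow_lt (hmul : ∀ a b c : R, c ≠ 0 → a < b → a * c < b * c)
    {x y : R} (hx : x ≠ 0) (hy : y ≠ 0) (hxy : x < y) :
    ∀ n : ℕ, 1 ≤ n → x ^ n < y ^ n := by
  intro n hn
  induction n with
  | zero => omega
  | succ m ih =>
    rcases Nat.eq_or_lt_of_le hn with h | h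
    · simpa [← h] using hxy
    · have hm : 1 ≤ m := by omega
      have h1 : x ^ m < y ^ m := ih hm
      have h2 : x ^ m * x < y ^ m * x := hmul _ _ x hx h1
      have h3 : y ^ m * x < y ^ m * y := by
        rw [mul_comm (y ^ m) x, mul_comm (y ^ m) y]
        exact hmul _ _ (y ^ m) (pow_ne_zero m hy) hxy
      calc x ^ (m + 1) = x ^ m * x := by ring
        _ < y ^ m * x := h2
        _ < y ^ m * y := h3
        _ = y ^ (m + 1) := by ring

lemma pm_inv_lt (hmul : ∀ a b c : R, c ≠ 0 → a < b → a * c < b * c)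
    {x y : R} (hx : x ≠ 0) (hy : y ≠ 0) (hxy : x < y) : y⁻¹ < x⁻¹ := by
  have := hmul x y (x⁻¹ * y⁻¹) (mul_ne_zero (inv_ne_zero hx) (inv_ne_zero hy)) hxy
  have e1 : x * (x⁻¹ * y⁻¹) = y⁻¹ := by field_simp
  have e2 : y * (x⁻¹ * y⁻¹) = x⁻¹ := by field_simp
  rwa [e1, e2] at this

lemma pm_zpow_lt (hmul : ∀ a b c : R, c ≠ 0 → a < b → a * c < b * c)
    {x y : R} (hx : x ≠ 0) (hy : y ≠ 0) (hxy : x < y) {m : ℤ} :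
    (0 < m → x ^ m < y ^ m) ∧ (m < 0 → y ^ m < x ^ m) := by
  constructor
  · intro hm
    have he : 1 ≤ m.natAbs := by omega
    have hcast : (m.natAbs : ℤ) = m := Int.natAbs_of_nonneg hm.le
    rw [← hcast, zpow_natCast, zpow_natCast]
    exact pm_pow_lt hmul hx hy hxy _ he
  · intro hm
    have he : 1 ≤ m.natAbs := by omega
    have hcast : (m.natAbs : ℤ) = -m := by omega
    have h1 : x ^ m.natAbs < y ^ m.natAbs := pm_pow_lt hmul hx hy hxy _ he
    have h2 : (y ^ m.natAbs)⁻¹ < (x ^ m.natAbs)⁻¹ :=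
      pm_inv_lt hmul (pow_ne_zero _ hx) (pow_ne_zero _ hy) h1
    have ex : x ^ m = (x ^ m.natAbs)⁻¹ := by
      rw [← zpow_natCast, hcast, zpow_neg, inv_inv]
    have ey : y ^ m = (y ^ m.natAbs)⁻¹ := by
      rw [← zpow_natCast, hcast, zpow_neg, inv_inv]
    rw [ex, ey]; exact h2

lemma pm_cmp_lt (hmul : ∀ a b c : R, c ≠ 0 → a < b → a * c < b * c)
    {γ δ x : R} (hγ : γ ≠ 0) (hδ : δ ≠ 0) (hx : x ≠ 0) (j k : ℤ) :
    γ * x ^ j < δ * x ^ k ↔ x ^ (j - k) < δ / γ := by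
  have hc : x ^ (-k) * γ⁻¹ ≠ 0 := mul_ne_zero (zpow_ne_zero _ hx) (inv_ne_zero hγ)
  rw [← pm_mul_lt hmul hc]
  have e1 : γ * x ^ j * (x ^ (-k) * γ⁻¹) = x ^ (j - k) := by
    rw [zpow_sub₀ hx, zpow_neg]
    field_simp
  have e2 : δ * x ^ k * (x ^ (-k) * γ⁻¹) = δ / γ := by
    rw [zpow_neg]
    field_simp
  rw [e1, e2]

lemma pm_cmp_eq {γ δ x : R} (hγ : γ ≠ 0) (hδ : δ ≠ 0) (hx : x ≠ 0) (j k : ℤ) :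
    γ * x ^ j = δ * x ^ k ↔ x ^ (j - k) = δ / γ := by
  rw [zpow_sub₀ hx, div_eq_div_iff (zpow_ne_zero _ hx) hγ, mul_comm (x ^ j) γ]


/-- strict-mono reflection for zpow on nonzeros with nonzero exponent -/
lemma pm_zpow_reflect (hmul : ∀ a b c : R, c ≠ 0 → a < b → a * c < b * c)
    {x y : R} (hx : x ≠ 0) (hy : y ≠ 0) {m : ℤ} (hm : m ≠ 0)
    (h : x ^ m < y ^ m) : (0 < m → x < y) ∧ (m < 0 → y < x) := by
  constructor
  · intro hm0
    by_contra hc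
    rcases lt_or_eq_of_le (not_lt.mp hc) with h1 | h1
    · exact absurd ((pm_zpow_lt hmul hy hx h1).1 hm0) (asymm h)
    · exact absurd (h1 ▸ h) (lt_irrefl _)
  · intro hm0
    by_contra hc
    rcases lt_or_eq_of_le (not_lt.mp hc) with h1 | h1
    · exact absurd ((pm_zpow_lt hmul hx hy h1).2 hm0) (asymm h)
    · exact absurd (h1 ▸ h) (lt_irrefl _)

lemma pm_transfer
    (hmul : ∀ a b c : R, c ≠ 0 → a < b → a * c < b * c)
    (hroot : ∀ (a : R) (n : ℕ), 1 ≤ n → ∃! b : R, b ^ n = a)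
    {γ δ : R} (hγ : γ ≠ 0) (hδ : δ ≠ 0) {j k : ℤ} (hjk : j ≠ k)
    {a b : R}
    (hnc : ∀ x : R, x ≠ 0 → a < x → x < b → γ * x ^ j ≠ δ * x ^ k)
    {lam mu : R} (hla : a < lam) (hlb : lam < b) (h0l : lam ≠ 0)
    (hma : a < mu) (hmb : mu < b) (h0m : mu ≠ 0)
    (h : γ * lam ^ j < δ * lam ^ k) : γ * mu ^ j < δ * mu ^ k := by
  rcases lt_trichotomy (γ * mu ^ j) (δ * mu ^ k) with hh | hh | hh
  · exact hh
  · exact absurd hh (hnc mu h0m hma hmb)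
  · exfalso
    set m : ℤ := j - k with hmdef
    have hm : m ≠ 0 := sub_ne_zero.mpr hjk
    have he : 1 ≤ m.natAbs := by omega
    set c : R := if 0 ≤ m then δ / γ else γ / δ with hcdef
    have hc0 : c ≠ 0 := by
      rw [hcdef]; split <;> exact div_ne_zero (by assumption) (by assumption)
    obtain ⟨w, hw, hwu⟩ := hroot c m.natAbs he
    have hw0 : w ≠ 0 := by
      intro hww
      rw [hww, zero_pow (by omega)] at hw
      exact hc0 hw.symm
    have hwm : w ^ m = δ / γ := by
      rcases hm.lt_or_gt with hneg | hpos
      · have hcast : (m.natAbs : ℤ) = -m := by omega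
        have : w ^ m = (w ^ m.natAbs)⁻¹ := by
          rw [← zpow_natCast, hcast, zpow_neg, inv_inv]
        rw [this, hw, hcdef, if_neg (not_le.mpr hneg), inv_div]
      · have hcast : (m.natAbs : ℤ) = m := by omega
        have : w ^ m = w ^ m.natAbs := by rw [← zpow_natCast, hcast]
        rw [this, hw, hcdef, if_pos hpos.le]
    have hcross : γ * w ^ j = δ * w ^ k := (pm_cmp_eq hγ hδ hw0 j k).mpr hwm
    have hlw : lam ^ m < w ^ m := by
      have := (pm_cmp_lt hmul hγ hδ h0l j k).mp h
      rwa [← hmdef, ← hwm] at this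
    have hwm' : w ^ m < mu ^ m := by
      have : δ * mu ^ k < γ * mu ^ j := hh
      have h2 := (pm_cmp_lt hmul hδ hγ h0m k j).mp this
      -- mu ^ (k - j) < γ / δ, i.e. (mu ^ m)⁻¹ < (w ^ m)⁻¹
      have e1 : mu ^ (k - j) = (mu ^ m)⁻¹ := by
        rw [hmdef, ← zpow_neg, neg_sub]
      have e2 : γ / δ = (w ^ m)⁻¹ := by rw [hwm, inv_div]
      rw [e1, e2] at h2
      -- invert
      by_contra hc2
      rcases lt_or_eq_of_le (not_lt.mp hc2) with h3 | h3
      · have h4 : (w ^ m)⁻¹ < (mu ^ m)⁻¹ := by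
          have hne1 : mu ^ m ≠ 0 := zpow_ne_zero _ h0m
          have hne2 : w ^ m ≠ 0 := zpow_ne_zero _ hw0
          have := hmul _ _ ((mu ^ m)⁻¹ * (w ^ m)⁻¹) (mul_ne_zero (inv_ne_zero hne1) (inv_ne_zero hne2)) h3
          have e3 : mu ^ m * ((mu ^ m)⁻¹ * (w ^ m)⁻¹) = (w ^ m)⁻¹ := by field_simp
          have e4 : w ^ m * ((mu ^ m)⁻¹ * (w ^ m)⁻¹) = (mu ^ m)⁻¹ := by field_simp
          rwa [e3, e4] at this
        exact absurd h4 (asymm h2)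
      · rw [h3] at h2; exact lt_irrefl _ h2
    rcases hm.lt_or_gt with hneg | hpos
    · have h1 : w < lam := (pm_zpow_reflect hmul h0l hw0 hm hlw).2 hneg
      have h2 : mu < w := (pm_zpow_reflect hmul hw0 h0m hm hwm').2 hneg
      exact hnc w hw0 (hma.trans h2) (h1.trans hlb) hcross
    · have h1 : lam < w := (pm_zpow_reflect hmul h0l hw0 hm hlw).1 hpos
      have h2 : w < mu := (pm_zpow_reflect hmul hw0 h0m hm hwm').1 hpos
      exact hnc w hw0 (hla.trans h1) (h2.trans hmb) hcross

end PMHelpers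

/-- `f` is piecewise monomial on `[u, v]` (order `a ≤ b ↔ a + b = b`). -/
def IsPM {R : Type*} [Semifield R] (u v : R) (f : R → R) : Prop :=
  ∃ (r : ℕ) (α : ℕ → R), 0 < r ∧ α 0 = u ∧ α r = v ∧
    (∀ s < r, α s + α (s + 1) = α (s + 1) ∧ α s ≠ α (s + 1)) ∧
    (∀ s < r, ∃ (γ : R) (j : ℤ), γ ≠ 0 ∧
      ∀ lam : R, α s + lam = lam → lam + α (s + 1) = α (s + 1) →
        f lam = γ * lam ^ j)

section PMMain
variable {R : Type*} [Semifield R] [LinearOrder R]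

theorem pm_main
    (hadd : ∀ a b : R, a + b = b ↔ a ≤ b)
    (hmul : ∀ a b c : R, c ≠ 0 → a < b → a * c < b * c)
    (hroot : ∀ (a : R) (n : ℕ), 1 ≤ n → ∃! b : R, b ^ n = a)
    (u v : R) (f g : R → R) (hf : IsPM u v f) (hg : IsPM u v g) :
    ∃ (r : ℕ) (z : ℕ → R), 0 < r ∧ z 0 = u ∧ z r = v ∧
      (∀ i < r, z i + z (i + 1) = z (i + 1) ∧ z i ≠ z (i + 1)) ∧
      ∀ i < r,
        (∀ lam : R, (z i + lam = lam ∧ z i ≠ lam) →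
            (lam + z (i + 1) = z (i + 1) ∧ lam ≠ z (i + 1)) →
            f lam + g lam = g lam ∧ f lam ≠ g lam) ∨
        (∀ lam : R, (z i + lam = lam ∧ z i ≠ lam) →
            (lam + z (i + 1) = z (i + 1) ∧ lam ≠ z (i + 1)) →
            f lam = g lam) ∨
        (∀ lam : R, (z i + lam = lam ∧ z i ≠ lam) →
            (lam + z (i + 1) = z (i + 1) ∧ lam ≠ z (i + 1)) →
            g lam + f lam = f lam ∧ g lam ≠ f lam) := by
  classical
  have hzero : ∀ x : R, (0 : R) ≤ x := fun x => (hadd 0 x).mp (zero_add x)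
  obtain ⟨r1, αf, hr1, hα0, hαr, hαc, hαm⟩ := hf
  obtain ⟨r2, αg, hr2, hβ0, hβr, hβc, hβm⟩ := hg
  have hchainf : ∀ s < r1, αf s < αf (s + 1) := fun s hs =>
    lt_iff_le_and_ne.mpr ⟨(hadd _ _).mp (hαc s hs).1, (hαc s hs).2⟩
  have hchaing : ∀ s < r2, αg s < αg (s + 1) := fun s hs =>
    lt_iff_le_and_ne.mpr ⟨(hadd _ _).mp (hβc s hs).1, (hβc s hs).2⟩
  have hmonof := pm_mono_of_chain αf r1 hchainf
  have hmonog := pm_mono_of_chain αg r2 hchaing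
  -- totalized monomial data
  have hfd : ∀ s, ∃ γ : R, ∃ j : ℤ, γ ≠ 0 ∧ (s < r1 → ∀ lam : R,
      αf s ≤ lam → lam ≤ αf (s + 1) → f lam = γ * lam ^ j) := by
    intro s
    by_cases h : s < r1
    · obtain ⟨γ, j, hγ, hP⟩ := hαm s h
      exact ⟨γ, j, hγ, fun _ lam h1 h2 => hP lam ((hadd _ _).mpr h1) ((hadd _ _).mpr h2)⟩
    · exact ⟨1, 0, one_ne_zero, fun h' => absurd h' h⟩
  choose γf jf hγf hfm using hfd
  have hgd : ∀ t, ∃ δ : R, ∃ k : ℤ, δ ≠ 0 ∧ (t < r2 → ∀ lam : R,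
      αg t ≤ lam → lam ≤ αg (t + 1) → g lam = δ * lam ^ k) := by
    intro t
    by_cases h : t < r2
    · obtain ⟨δ, k, hδ, hP⟩ := hβm t h
      exact ⟨δ, k, hδ, fun _ lam h1 h2 => hP lam ((hadd _ _).mpr h1) ((hadd _ _).mpr h2)⟩
    · exact ⟨1, 0, one_ne_zero, fun h' => absurd h' h⟩
  choose γg jg hγg hgm using hgd
  -- crossing points
  have hcd : ∀ s t : ℕ, ∃ w : R, jf s ≠ jg t →
      w ^ ((jf s - jg t).natAbs) =
        if 0 ≤ jf s - jg t then γg t / γf s else γf s / γg t := by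
    intro s t
    by_cases h : jf s = jg t
    · exact ⟨1, fun h' => absurd h h'⟩
    · have hm : jf s - jg t ≠ 0 := sub_ne_zero.mpr h
      have he : 1 ≤ (jf s - jg t).natAbs := by
        simpa [Nat.one_le_iff_ne_zero, Int.natAbs_ne_zero] using hm
      obtain ⟨w, hw, -⟩ := hroot _ _ he
      exact ⟨w, fun _ => hw⟩
  choose cross hcross using hcd
  -- the breakpoint set
  set Z : Finset R :=
    ((Finset.range (r1 + 1)).image αf ∪ (Finset.range (r2 + 1)).image αg ∪
      ((Finset.range r1) ×ˢ (Finset.range r2)).image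
        (fun p => cross p.1 p.2)).filter (fun x => u ≤ x ∧ x ≤ v) with hZdef
  have hZbound : ∀ x ∈ Z, u ≤ x ∧ x ≤ v := fun x hx => (Finset.mem_filter.mp hx).2
  have hmemα : ∀ s ≤ r1, αf s ∈ Z := by
    intro s hs
    refine Finset.mem_filter.mpr ⟨?_, ?_, ?_⟩
    · exact Finset.mem_union_left _ (Finset.mem_union_left _
        (Finset.mem_image.mpr ⟨s, Finset.mem_range.mpr (by omega), rfl⟩))
    · rw [← hα0]; exact hmonof 0 s (Nat.zero_le s) hs
    · rw [← hαr]; exact hmonof s r1 hs le_rfl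
  have hmemβ : ∀ t ≤ r2, αg t ∈ Z := by
    intro t ht
    refine Finset.mem_filter.mpr ⟨?_, ?_, ?_⟩
    · exact Finset.mem_union_left _ (Finset.mem_union_right _
        (Finset.mem_image.mpr ⟨t, Finset.mem_range.mpr (by omega), rfl⟩))
    · rw [← hβ0]; exact hmonog 0 t (Nat.zero_le t) ht
    · rw [← hβr]; exact hmonog t r2 ht le_rfl
  have hmemc : ∀ s < r1, ∀ t < r2, u ≤ cross s t → cross s t ≤ v → cross s t ∈ Z := by
    intro s hs t ht h1 h2
    refine Finset.mem_filter.mpr ⟨?_, h1, h2⟩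
    exact Finset.mem_union_right _ (Finset.mem_image.mpr
      ⟨(s, t), Finset.mem_product.mpr ⟨Finset.mem_range.mpr hs, Finset.mem_range.mpr ht⟩, rfl⟩)
  have huZ : u ∈ Z := hα0 ▸ hmemα 0 (Nat.zero_le r1)
  have hvZ : v ∈ Z := hαr ▸ hmemα r1 le_rfl
  have huv : u < v := by
    have h1 : αf 0 < αf 1 := hchainf 0 hr1
    have h2 : αf 1 ≤ αf r1 := hmonof 1 r1 hr1 le_rfl
    rw [← hα0, ← hαr]; exact h1.trans_le h2
  -- sorted list
  set l : List R := Z.sort (· ≤ ·) with hldef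
  have hlen : l.length = Z.card := Finset.length_sort _
  have hsorted : l.SortedLT := Finset.sortedLT_sort Z
  have hmeml : ∀ x, x ∈ l ↔ x ∈ Z := fun x => Finset.mem_sort _
  have hcard2 : 2 ≤ Z.card := Finset.one_lt_card.mpr ⟨u, huZ, v, hvZ, ne_of_lt huv⟩
  set r : ℕ := l.length - 1 with hrdef
  have hr0 : 0 < r := by omega
  have hrlen : r + 1 = l.length := by omega
  set z : ℕ → R := fun i => l.getD i v with hzdef
  have hget : ∀ i (h : i < l.length), z i = l.get ⟨i, h⟩ := fun i h =>
    List.getD_eq_get l v ⟨i, h⟩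
  have hzmem : ∀ i, i < l.length → z i ∈ Z := by
    intro i h
    rw [hget i h]
    exact (hmeml _).mp (l.get_mem _)
  have hzlt : ∀ i j : ℕ, i < j → j < l.length → z i < z j := by
    intro i j hij hj
    rw [hget i (hij.trans hj), hget j hj]
    exact hsorted.strictMono_get (by exact Fin.mk_lt_mk.mpr hij)
  have hidx : ∀ x ∈ Z, ∃ n, ∃ h : n < l.length, z n = x := by
    intro x hx
    obtain ⟨n, hn⟩ := List.mem_iff_get.mp ((hmeml x).mpr hx)
    exact ⟨n.1, n.2, by rw [hget n.1 n.2]; simpa using hn⟩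
  have hz0 : z 0 = u := by
    obtain ⟨n, hn, he⟩ := hidx u huZ
    refine le_antisymm ?_ ((hZbound _ (hzmem 0 (by omega))).1)
    rcases Nat.eq_zero_or_pos n with h | h
    · rw [← he, h]
    · exact (hzlt 0 n h hn).le.trans he.le
  have hzr : z r = v := by
    obtain ⟨n, hn, he⟩ := hidx v hvZ
    refine le_antisymm ((hZbound _ (hzmem r (by omega))).2) ?_
    rcases Nat.lt_or_ge n r with h | h
    · exact he ▸ (hzlt n r h (by omega)).le
    · have : n = r := by omega
      rw [← he, this]
  have hgap : ∀ x ∈ Z, ∀ i, i < r → ¬(z i < x ∧ x < z (i + 1)) := by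
    intro x hx i hi ⟨h1, h2⟩
    obtain ⟨n, hn, he⟩ := hidx x hx
    rcases Nat.lt_or_ge n (i + 1) with h | h
    · rcases Nat.lt_or_ge n i with h' | h'
      · exact absurd (he ▸ hzlt n i h' (by omega)) (asymm h1)
      · have : n = i := by omega
        rw [← he, this] at h1; exact lt_irrefl _ h1
    · rcases Nat.lt_or_ge (i + 1) n with h' | h'
      · exact absurd (he ▸ hzlt (i + 1) n h' hn) (asymm h2)
      · have : n = i + 1 := by omega
        rw [← he, this] at h2; exact lt_irrefl _ h2
  refine ⟨r, z, hr0, hz0, hzr, ?_, ?_⟩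
  · intro i hi
    have := hzlt i (i + 1) (Nat.lt_succ_self i) (by omega)
    exact ⟨(hadd _ _).mpr this.le, this.ne⟩
  · intro i hi
    have hii : z i < z (i + 1) := hzlt i (i + 1) (Nat.lt_succ_self i) (by omega)
    have hziZ := hzmem i (by omega)
    have hzi1Z := hzmem (i + 1) (by omega)
    have hub : u ≤ z i := (hZbound _ hziZ).1
    have hvb : z (i + 1) ≤ v := (hZbound _ hzi1Z).2
    obtain ⟨s, hsr, hs1, hs2⟩ := pm_find_piece αf r1 hchainf (z i) (z (i + 1))
      (hα0 ▸ hub) hii (hαr ▸ hvb)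
      (fun s' hs' hcon => hgap _ (hmemα s' hs') i hi hcon)
    obtain ⟨t, htr, ht1, ht2⟩ := pm_find_piece αg r2 hchaing (z i) (z (i + 1))
      (hβ0 ▸ hub) hii (hβr ▸ hvb)
      (fun t' ht' hcon => hgap _ (hmemβ t' ht') i hi hcon)
    have hfeq : ∀ lam, z i < lam → lam < z (i + 1) → f lam = γf s * lam ^ jf s :=
      fun lam h1 h2 => hfm s hsr lam (hs1.trans h1.le) (h2.le.trans hs2)
    have hgeq : ∀ lam, z i < lam → lam < z (i + 1) → g lam = γg t * lam ^ jg t :=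
      fun lam h1 h2 => hgm t htr lam (ht1.trans h1.le) (h2.le.trans ht2)
    have hne0 : ∀ lam : R, z i < lam → lam ≠ 0 :=
      fun lam h1 => (lt_of_le_of_lt (hzero _) h1).ne'
    -- convenient converters
    have hconv : ∀ lam : R, (z i + lam = lam ∧ z i ≠ lam) →
        (lam + z (i + 1) = z (i + 1) ∧ lam ≠ z (i + 1)) →
        z i < lam ∧ lam < z (i + 1) := by
      intro lam ⟨e1, n1⟩ ⟨e2, n2⟩
      exact ⟨lt_iff_le_and_ne.mpr ⟨(hadd _ _).mp e1, n1⟩,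
        lt_iff_le_and_ne.mpr ⟨(hadd _ _).mp e2, n2⟩⟩
    by_cases hjk : jf s = jg t
    · rcases lt_trichotomy (γf s) (γg t) with hcm | hcm | hcm
      · left
        intro lam hyp1 hyp2
        obtain ⟨h1, h2⟩ := hconv lam hyp1 hyp2
        have hlt : f lam < g lam := by
          rw [hfeq lam h1 h2, hgeq lam h1 h2, hjk]
          exact hmul _ _ _ (zpow_ne_zero _ (hne0 lam h1)) hcm
        exact ⟨(hadd _ _).mpr hlt.le, hlt.ne⟩
      · right; left
        intro lam hyp1 hyp2
        obtain ⟨h1, h2⟩ := hconv lam hyp1 hyp2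
        rw [hfeq lam h1 h2, hgeq lam h1 h2, hjk, hcm]
      · right; right
        intro lam hyp1 hyp2
        obtain ⟨h1, h2⟩ := hconv lam hyp1 hyp2
        have hlt : g lam < f lam := by
          rw [hfeq lam h1 h2, hgeq lam h1 h2, hjk]
          exact hmul _ _ _ (zpow_ne_zero _ (hne0 lam h1)) hcm
        exact ⟨(hadd _ _).mpr hlt.le, hlt.ne⟩
    · -- distinct exponents : no crossing inside the interval
      have hm : jf s - jg t ≠ 0 := sub_ne_zero.mpr hjk
      have he : 1 ≤ (jf s - jg t).natAbs := by
        simpa [Nat.one_le_iff_ne_zero, Int.natAbs_ne_zero] using hm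
      have hnc : ∀ x : R, x ≠ 0 → z i < x → x < z (i + 1) →
          γf s * x ^ jf s ≠ γg t * x ^ jg t := by
        intro x hx0 h1 h2 heqx
        have hxm : x ^ (jf s - jg t) = γg t / γf s :=
          (pm_cmp_eq (hγf s) (hγg t) hx0 _ _).mp heqx
        have hxe : x ^ ((jf s - jg t).natAbs) =
            (if 0 ≤ jf s - jg t then γg t / γf s else γf s / γg t) := by
          rcases hm.lt_or_gt with hneg | hpos
          · rw [if_neg (not_le.mpr hneg)]
            have hcast : ((jf s - jg t).natAbs : ℤ) = -(jf s - jg t) := by omega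
            have e1 : x ^ ((jf s - jg t).natAbs) = (x ^ (jf s - jg t))⁻¹ := by
              rw [← zpow_natCast, hcast, zpow_neg]
            rw [e1, hxm, inv_div]
          · rw [if_pos hpos.le]
            have hcast : ((jf s - jg t).natAbs : ℤ) = jf s - jg t := by omega
            rw [← hxm, ← zpow_natCast, hcast]
        obtain ⟨w, hw, hwu⟩ := hroot _ _ he
        have hxw : x = w := hwu x hxe
        have hcw : cross s t = w := hwu _ (hcross s t hjk)
        have hxZ : x ∈ Z := by
          rw [hxw, ← hcw]
          exact hmemc s hsr t htr (by rw [hcw, ← hxw]; exact hub.trans h1.le)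
            (by rw [hcw, ← hxw]; exact h2.le.trans hvb)
        exact hgap x hxZ i hi ⟨h1, h2⟩
      by_cases hex1 : ∃ x : R, (z i < x ∧ x < z (i + 1)) ∧
          γf s * x ^ jf s < γg t * x ^ jg t
      · left
        obtain ⟨x, ⟨hx1, hx2⟩, hxlt⟩ := hex1
        intro lam hyp1 hyp2
        obtain ⟨h1, h2⟩ := hconv lam hyp1 hyp2
        have hlt : f lam < g lam := by
          rw [hfeq lam h1 h2, hgeq lam h1 h2]
          exact pm_transfer hmul hroot (hγf s) (hγg t) hjk hnc hx1 hx2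
            (hne0 x hx1) h1 h2 (hne0 lam h1) hxlt
        exact ⟨(hadd _ _).mpr hlt.le, hlt.ne⟩
      · by_cases hex2 : ∃ x : R, (z i < x ∧ x < z (i + 1)) ∧
            γg t * x ^ jg t < γf s * x ^ jf s
        · right; right
          obtain ⟨x, ⟨hx1, hx2⟩, hxlt⟩ := hex2
          intro lam hyp1 hyp2
          obtain ⟨h1, h2⟩ := hconv lam hyp1 hyp2
          have hlt : g lam < f lam := by
            rw [hfeq lam h1 h2, hgeq lam h1 h2]
            exact pm_transfer hmul hroot (hγg t) (hγf s) (Ne.symm hjk)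
              (fun y hy0 hy1 hy2 heqy => hnc y hy0 hy1 hy2 heqy.symm)
              hx1 hx2 (hne0 x hx1) h1 h2 (hne0 lam h1) hxlt
          exact ⟨(hadd _ _).mpr hlt.le, hlt.ne⟩
        · right; left
          intro lam hyp1 hyp2
          obtain ⟨h1, h2⟩ := hconv lam hyp1 hyp2
          rw [hfeq lam h1 h2, hgeq lam h1 h2]
          refine le_antisymm ?_ ?_
          · exact not_lt.mp fun hc => hex2 ⟨lam, ⟨h1, h2⟩, hc⟩
          · exact not_lt.mp fun hc => hex1 ⟨lam, ⟨h1, h2⟩, hc⟩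


end PMMain

/-- For piecewise monomial `f, g` on `[u, v]` in a root-closed bipotent
semifield there is a subdivision `u = z₀ < z₁ < ⋯ < z_r = v` such that on each
open interval `(z_{i-1}, z_i)` exactly one of `f < g`, `f = g`, `f > g`
holds everywhere. -/
theorem stmt8 {R : Type*} [Semifield R]
    (hbip : ∀ a b : R, a + b = a ∨ a + b = b)
    (hmono : ∀ a b c : R, c ≠ 0 → a + b = b → a ≠ b →
      a * c + b * c = b * c ∧ a * c ≠ b * c)
    (hroot : ∀ (a : R) (n : ℕ), 1 ≤ n → ∃! b : R, b ^ n = a)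
    (u v : R) (f g : R → R) (hf : IsPM u v f) (hg : IsPM u v g) :
    ∃ (r : ℕ) (z : ℕ → R), 0 < r ∧ z 0 = u ∧ z r = v ∧
      (∀ i < r, z i + z (i + 1) = z (i + 1) ∧ z i ≠ z (i + 1)) ∧
      ∀ i < r,
        (∀ lam : R, (z i + lam = lam ∧ z i ≠ lam) →
            (lam + z (i + 1) = z (i + 1) ∧ lam ≠ z (i + 1)) →
            f lam + g lam = g lam ∧ f lam ≠ g lam) ∨
        (∀ lam : R, (z i + lam = lam ∧ z i ≠ lam) →
            (lam + z (i + 1) = z (i + 1) ∧ lam ≠ z (i + 1)) →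
            f lam = g lam) ∨
        (∀ lam : R, (z i + lam = lam ∧ z i ≠ lam) →
            (lam + z (i + 1) = z (i + 1) ∧ lam ≠ z (i + 1)) →
            g lam + f lam = f lam ∧ g lam ≠ f lam) := by
  classical
  have hidem : ∀ a : R, a + a = a := fun a => (hbip a a).elim id id
  letI : LinearOrder R :=
    { le := fun a b => a + b = b
      lt := fun a b => a + b = b ∧ a ≠ b
      le_refl := hidem
      le_trans := fun a b c hab hbc => by
        show a + c = c
        calc a + c = a + (b + c) := by rw [hbc]
          _ = a + b + c := by rw [add_assoc]
          _ = b + c := by rw [hab]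
          _ = c := hbc
      le_antisymm := fun a b hab hba => by
        calc a = b + a := hba.symm
          _ = a + b := add_comm b a
          _ = b := hab
      le_total := fun a b => (hbip a b).elim
        (fun h => Or.inr (by rwa [add_comm] at h)) Or.inl
      lt_iff_le_not_ge := fun a b => by
        constructor
        · rintro ⟨h1, h2⟩
          refine ⟨h1, fun hba => h2 ?_⟩
          calc a = b + a := hba.symm
            _ = a + b := add_comm b a
            _ = b := h1
        · rintro ⟨h1, h2⟩
          refine ⟨h1, fun hab => h2 ?_⟩
          show b + a = a
          rw [hab]; exact hidem b
      toDecidableLE := fun a b => Classical.propDecidable _ }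
  have hadd : ∀ a b : R, a + b = b ↔ a ≤ b := fun a b => Iff.rfl
  have hmul : ∀ a b c : R, c ≠ 0 → a < b → a * c < b * c := by
    intro a b c hc h
    obtain ⟨h1, h2⟩ : a + b = b ∧ a ≠ b := h
    exact hmono a b c hc h1 h2
  exact pm_main hadd hmul hroot u v f g hf hg
end

section
/- If f : [u,v] → R is piecewise monomial with image [ρ, σ], and φ is a piecewise monomial function on an interval containing [ρ, σ], then φ ∘ f is piecewise monomial on [u, v]. -/
namespace PMAux

variable {R : Type*} [Semifield R]

theorem ltrans {a b c : R} (h1 : a + b = b) (h2 : b + c = c) : a + c = c := by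
  rw [← h2, ← add_assoc, h1]

/-- weak piecewise monomial : allows empty pieces and r = 0 -/
def WPM (u v : R) (f : R → R) : Prop :=
  ∃ (r : ℕ) (α : ℕ → R), α 0 = u ∧ α r = v ∧
    (∀ s < r, α s + α (s + 1) = α (s + 1)) ∧
    (∀ s < r, ∃ (γ : R) (j : ℤ), γ ≠ 0 ∧
      ∀ lam : R, α s + lam = lam → lam + α (s + 1) = α (s + 1) →
        f lam = γ * lam ^ j)

theorem wpm_refl (u : R) (f : R → R) : WPM u u f :=
  ⟨0, fun _ => u, rfl, rfl, by omega, by omega⟩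

theorem chain_mono (hbip : ∀ a b : R, a + b = a ∨ a + b = b) {r : ℕ} {α : ℕ → R}
    (hc : ∀ s < r, α s + α (s + 1) = α (s + 1)) :
    ∀ i k, i ≤ k → k ≤ r → α i + α k = α k := by
  intro i k hik hkr
  induction k with
  | zero =>
      have : i = 0 := by omega
      subst this
      rcases hbip (α 0) (α 0) with h | h <;> exact h
  | succ n ih =>
      rcases Nat.lt_or_ge i (n+1) with h | h
      · have h1 : α i + α n = α n := ih (by omega) (by omega)
        exact ltrans h1 (hc n (by omega))
      · have : i = n + 1 := by omega
        subst this
        rcases hbip (α (n+1)) (α (n+1)) with h | h <;> exact h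

theorem wpm_glue {u w v : R} {f : R → R} (h1 : WPM u w f) (h2 : WPM w v f) :
    WPM u v f := by
  obtain ⟨r, α, ha0, har, hac, hap⟩ := h1
  obtain ⟨t, β, hb0, hbt, hbc, hbp⟩ := h2
  have key : ∀ n, n ≥ r → (if n ≤ r then α n else β (n - r)) = β (n - r) := by
    intro n hn
    rcases Nat.eq_or_lt_of_le hn with he | hl
    · rw [if_pos (by omega), ← he, har, Nat.sub_self, hb0]
    · rw [if_neg (by omega)]
  refine ⟨r + t, fun n => if n ≤ r then α n else β (n - r), by simp [ha0], ?_, ?_, ?_⟩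
  · beta_reduce
    rw [key (r + t) (by omega), add_tsub_cancel_left]
    exact hbt
  · intro s hs
    beta_reduce
    by_cases hsr : s < r
    · rw [if_pos (show s ≤ r by omega), if_pos (show s + 1 ≤ r by omega)]
      exact hac s hsr
    · rw [key s (by omega), key (s+1) (by omega),
        show s + 1 - r = (s - r) + 1 by omega]
      exact hbc (s - r) (by omega)
  · intro s hs
    by_cases hsr : s < r
    · obtain ⟨γ, j, hγ, hm⟩ := hap s hsr
      refine ⟨γ, j, hγ, ?_⟩
      beta_reduce
      rw [if_pos (show s ≤ r by omega), if_pos (show s + 1 ≤ r by omega)]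
      exact hm
    · obtain ⟨γ, j, hγ, hm⟩ := hbp (s - r) (by omega)
      refine ⟨γ, j, hγ, ?_⟩
      beta_reduce
      rw [key s (by omega), key (s+1) (by omega),
        show s + 1 - r = (s - r) + 1 by omega]
      exact hm

theorem wpm_congr (hbip : ∀ a b : R, a + b = a ∨ a + b = b)
    {u v : R} {f g : R → R} (h : WPM u v f)
    (hfg : ∀ lam : R, u + lam = lam → lam + v = v → f lam = g lam) :
    WPM u v g := by
  obtain ⟨r, α, ha0, har, hac, hap⟩ := h
  refine ⟨r, α, ha0, har, hac, ?_⟩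
  intro s hs
  obtain ⟨γ, j, hγ, hm⟩ := hap s hs
  refine ⟨γ, j, hγ, fun lam h1 h2 => ?_⟩
  rw [← hfg lam ?_ ?_]
  · exact hm lam h1 h2
  · rw [← ha0]
    exact ltrans (chain_mono hbip hac 0 s (by omega) (by omega)) h1
  · rw [← har]
    exact ltrans h2 (chain_mono hbip hac (s+1) r (by omega) (by omega))

theorem wpm_isPM {u v : R} {f : R → R} (h : WPM u v f) (hne : u ≠ v) :
    IsPM u v f := by
  obtain ⟨r, α, h0, hr, hc, hp⟩ := h
  induction r using Nat.strong_induction_on generalizing α with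
  | _ r ih =>
    rcases Nat.eq_zero_or_pos r with hr0 | hr0
    · subst hr0; exact absurd (h0 ▸ hr) hne
    by_cases hdist : ∀ s < r, α s ≠ α (s + 1)
    · exact ⟨r, α, hr0, h0, hr, fun s hs => ⟨hc s hs, hdist s hs⟩, hp⟩
    · push_neg at hdist
      obtain ⟨s, hs, hes⟩ := hdist
      have key : ∀ k, k > s → (if k ≤ s then α k else α (k + 1)) = α (k + 1) := by
        intro k hk; rw [if_neg (by omega)]
      refine ih (r - 1) (by omega) (fun k => if k ≤ s then α k else α (k + 1)) ?_ ?_ ?_ ?_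
      · simpa using h0
      · beta_reduce
        by_cases hrs : r - 1 ≤ s
        · have hsr1 : s = r - 1 := by omega
          rw [if_pos hrs, ← hsr1, hes, show s + 1 = r from by omega]
          exact hr
        · rw [if_neg hrs, show r - 1 + 1 = r by omega]; exact hr
      · intro k hk
        beta_reduce
        rcases Nat.lt_or_ge k s with h1 | h1
        · rw [if_pos (show k ≤ s by omega), if_pos (show k + 1 ≤ s by omega)]
          exact hc k (by omega)
        · rcases Nat.eq_or_lt_of_le h1 with h2 | h2
          · rw [if_pos (show k ≤ s by omega), key (k+1) (by omega), ← h2, hes, h2]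
            exact hc (k + 1) (by omega)
          · rw [key k (by omega), key (k+1) (by omega)]
            exact hc (k + 1) (by omega)
      · intro k hk
        rcases Nat.lt_or_ge k s with h1 | h1
        · obtain ⟨γ, j, hγ, hm⟩ := hp k (by omega)
          refine ⟨γ, j, hγ, ?_⟩
          beta_reduce
          rw [if_pos (show k ≤ s by omega), if_pos (show k + 1 ≤ s by omega)]
          exact hm
        · rcases Nat.eq_or_lt_of_le h1 with h2 | h2
          · obtain ⟨γ, j, hγ, hm⟩ := hp (k + 1) (by omega)
            refine ⟨γ, j, hγ, ?_⟩
            beta_reduce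
            rw [if_pos (show k ≤ s by omega), key (k+1) (by omega), ← h2, hes, h2]
            exact hm
          · obtain ⟨γ, j, hγ, hm⟩ := hp (k + 1) (by omega)
            refine ⟨γ, j, hγ, ?_⟩
            beta_reduce
            rw [key k (by omega), key (k+1) (by omega)]
            exact hm


theorem lrefl (hbip : ∀ a b : R, a + b = a ∨ a + b = b) (a : R) : a + a = a := by
  rcases hbip a a with h | h <;> exact h

theorem lantisymm {a b : R} (h1 : a + b = b) (h2 : b + a = a) : a = b := by
  rw [← h2, add_comm, h1]

theorem ltotal (hbip : ∀ a b : R, a + b = a ∨ a + b = b) (a b : R) :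
    a + b = b ∨ b + a = a := by
  rcases hbip a b with h | h
  · right; rw [add_comm]; exact h
  · left; exact h

theorem add_le (hbip : ∀ a b : R, a + b = a ∨ a + b = b) {a b : R} (c : R)
    (h : a + b = b) : (a + c) + (b + c) = b + c := by
  calc (a + c) + (b + c) = (a + b) + (c + c) := by ring
  _ = b + c := by rw [h, lrefl hbip]

open Classical in
noncomputable def mn (y d : R) : R := if y + d = d then y else d

noncomputable def cl (c d x : R) : R := mn (x + c) d

theorem cl_ge (hbip : ∀ a b : R, a + b = a ∨ a + b = b) {c d : R} (hcd : c + d = d)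
    (x : R) : c + cl c d x = cl c d x := by
  unfold cl mn
  split_ifs with h
  · calc c + (x + c) = x + (c + c) := by ring
    _ = x + c := by rw [lrefl hbip]
  · exact hcd

theorem cl_le (hbip : ∀ a b : R, a + b = a ∨ a + b = b) (c d x : R) :
    cl c d x + d = d := by
  unfold cl mn
  split_ifs with h
  · exact h
  · exact lrefl hbip d

theorem cl_mono (hbip : ∀ a b : R, a + b = a ∨ a + b = b) {c d x x' : R}
    (h : x + x' = x') : cl c d x + cl c d x' = cl c d x' := by
  have hy : (x + c) + (x' + c) = x' + c := add_le hbip c h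
  unfold cl mn
  split_ifs with h1 h2 h2
  · exact hy
  · exact h1
  · exact absurd (ltrans hy h2) h1
  · exact lrefl hbip d

theorem cl_bot (hbip : ∀ a b : R, a + b = a ∨ a + b = b) {c d x : R}
    (hcd : c + d = d) (h : x + c = c) : cl c d x = c := by
  unfold cl mn
  rw [h, if_pos hcd]

theorem cl_top (hbip : ∀ a b : R, a + b = a ∨ a + b = b) {c d x : R}
    (hcd : c + d = d) (h : d + x = x) : cl c d x = d := by
  have hcx : c + x = x := ltrans hcd h
  unfold cl mn
  rw [add_comm x c, hcx]
  split_ifs with h1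
  · exact lantisymm h1 h
  · rfl

theorem cl_strict (hbip : ∀ a b : R, a + b = a ∨ a + b = b) {c d x x' : R}
    (hcd : c + d = d) (hxx : x + x' = x') (hne : cl c d x ≠ cl c d x') :
    (x + cl c d x = cl c d x) ∧ (cl c d x' + x' = x') := by
  have hmono := cl_mono hbip (c := c) (d := d) hxx
  constructor
  · have hAd : cl c d x ≠ d := by
      intro hA
      have h1 : cl c d x' + d = d := cl_le hbip c d x'
      have h2 : d + cl c d x' = cl c d x' := by have h := hmono; rwa [hA] at h
      exact hne (hA.trans (lantisymm h2 h1))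
    unfold cl mn at hAd ⊢
    split_ifs with h1
    · calc x + (x + c) = (x + x) + c := by ring
      _ = x + c := by rw [lrefl hbip]
    · rw [if_neg h1] at hAd
      exact absurd rfl hAd
  · have hBc : cl c d x' ≠ c := by
      intro hB
      have h3 : c + cl c d x = cl c d x := cl_ge hbip hcd x
      have h4 : cl c d x + c = c := by have h := hmono; rwa [hB] at h
      exact hne ((lantisymm h4 h3).trans hB.symm)
    have hx'c : x' + c = x' ∨ x' + c = c := by
      rcases ltotal hbip c x' with h1 | h1
      · left; rw [add_comm]; exact h1
      · right; exact h1
    unfold cl mn at hBc ⊢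
    split_ifs with h1
    · rcases hx'c with h2 | h2
      · rw [h2]; exact lrefl hbip x'
      · rw [if_pos h1] at hBc
        exact absurd h2 hBc
    · rcases hx'c with h2 | h2
      · rw [h2] at h1
        rcases ltotal hbip d x' with h3 | h3
        · exact h3
        · exact absurd h3 h1
      · exact absurd (by rw [h2]; exact hcd) h1

theorem find_piece (hbip : ∀ a b : R, a + b = a ∨ a + b = b) {t : ℕ} {β : ℕ → R}
    (ht : 0 < t) (hc : ∀ s < t, β s + β (s + 1) = β (s + 1)) {x : R}
    (hx0 : β 0 + x = x) (hxt : x + β t = β t) :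
    ∃ k, k < t ∧ β k + x = x ∧ x + β (k + 1) = β (k + 1) := by
  induction t with
  | zero => omega
  | succ n ih =>
    rcases Nat.eq_zero_or_pos n with h | h
    · subst h; exact ⟨0, by omega, hx0, hxt⟩
    · rcases ltotal hbip x (β n) with h1 | h1
      · obtain ⟨k, hk, hx⟩ := ih h (fun s hs => hc s (by omega)) h1
        exact ⟨k, by omega, hx⟩
      · exact ⟨n, by omega, h1, hxt⟩

theorem point_mono (hbip : ∀ a b : R, a + b = a ∨ a + b = b) {a b x : R} {φ : R → R}
    (hφ : IsPM a b φ) (hax : a + x = x) (hxb : x + b = b) :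
    ∃ (c : R) (m : ℤ), c ≠ 0 ∧ φ x = c * x ^ m := by
  obtain ⟨t, β, ht, hb0, hbt, hbc, hbp⟩ := hφ
  obtain ⟨k, hk, h1, h2⟩ := find_piece hbip ht (fun s hs => (hbc s hs).1)
    (by rw [hb0]; exact hax) (by rw [hbt]; exact hxb)
  obtain ⟨γ, j, hγ, hm⟩ := hbp k hk
  exact ⟨γ, j, hγ, hm x h1 h2⟩

theorem val_ne_zero (hbip : ∀ a b : R, a + b = a ∨ a + b = b) {a b x : R} {φ : R → R}
    (hφ : IsPM a b φ) (hax : a + x = x) (hxb : x + b = b) (hx : x ≠ 0) :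
    φ x ≠ 0 := by
  obtain ⟨c, m, hc, he⟩ := point_mono hbip hφ hax hxb
  rw [he]
  exact mul_ne_zero hc (zpow_ne_zero m hx)

theorem wpm_restrict (hbip : ∀ a b : R, a + b = a ∨ a + b = b) {a b c d : R} {φ : R → R}
    (hφ : IsPM a b φ) (hac : a + c = c) (hcd : c + d = d) (hdb : d + b = b) :
    WPM c d φ := by
  obtain ⟨t, β, ht, hb0, hbt, hbc, hbp⟩ := id hφ
  refine ⟨t, fun k => cl c d (β k), ?_, ?_, ?_, ?_⟩
  · beta_reduce; rw [hb0]; exact cl_bot hbip hcd hac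
  · beta_reduce; rw [hbt]; exact cl_top hbip hcd hdb
  · intro s hs; exact cl_mono hbip ((hbc s hs).1)
  · intro s hs
    by_cases hne : cl c d (β s) = cl c d (β (s + 1))
    · set x := cl c d (β s) with hx
      have hax : a + x = x := ltrans hac (cl_ge hbip hcd (β s))
      have hxb : x + b = b := ltrans (cl_le hbip c d (β s)) hdb
      obtain ⟨c', m, hc', he⟩ := point_mono hbip hφ hax hxb
      refine ⟨c', m, hc', fun lam hl1 hl2 => ?_⟩
      beta_reduce at hl1 hl2
      rw [← hne] at hl2
      have : x = lam := lantisymm hl1 hl2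
      rw [← this]
      exact he
    · obtain ⟨h1, h2⟩ := cl_strict hbip hcd ((hbc s hs).1) hne
      obtain ⟨γ, j, hγ, hm⟩ := hbp s hs
      refine ⟨γ, j, hγ, fun lam hl1 hl2 => ?_⟩
      beta_reduce at hl1 hl2
      exact hm lam (ltrans h1 hl1) (ltrans hl2 h2)

theorem lzero {a : R} (h : a + 0 = 0) : a = 0 := by
  rw [← h, add_zero]

theorem pow_le (hbip : ∀ a b : R, a + b = a ∨ a + b = b)
    (hmono : ∀ a b c : R, a + b = b → a * c + b * c = b * c)
    {a b : R} (h : a + b = b) : ∀ n : ℕ, a ^ n + b ^ n = b ^ n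
  | 0 => by simpa using lrefl hbip 1
  | (n+1) => by
      have h1 : a ^ n + b ^ n = b ^ n := pow_le hbip hmono h n
      have h2 : a ^ n * a + b ^ n * a = b ^ n * a := hmono _ _ _ h1
      have h3 : a * b ^ n + b * b ^ n = b * b ^ n := hmono _ _ _ h
      have h4 : a ^ (n+1) + b ^ n * a = b ^ n * a := by
        rw [pow_succ]; exact h2
      have h5 : b ^ n * a + b ^ (n+1) = b ^ (n+1) := by
        rw [pow_succ]
        calc b ^ n * a + b ^ n * b = a * b ^ n + b * b ^ n := by ring
        _ = b * b ^ n := h3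
        _ = b ^ n * b := by ring
      exact ltrans h4 h5

theorem pow_inj (hroot : ∀ (a : R) (n : ℕ), 1 ≤ n → ∃! b : R, b ^ n = a)
    {a b : R} {n : ℕ} (hn : 1 ≤ n) (h : a ^ n = b ^ n) : a = b := by
  obtain ⟨c, _, hu⟩ := hroot (b ^ n) n hn
  rw [hu a h, hu b rfl]

theorem pow_le_cancel (hbip : ∀ a b : R, a + b = a ∨ a + b = b)
    (hmono : ∀ a b c : R, a + b = b → a * c + b * c = b * c)
    (hroot : ∀ (a : R) (n : ℕ), 1 ≤ n → ∃! b : R, b ^ n = a)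
    {a b : R} {n : ℕ} (hn : 1 ≤ n) (h : a ^ n + b ^ n = b ^ n) : a + b = b := by
  rcases ltotal hbip a b with h' | h'
  · exact h'
  · have h2 := pow_le hbip hmono h' n
    have : a = b := pow_inj hroot hn (lantisymm h h2)
    rw [this, lrefl hbip]

theorem inv_le (hmono : ∀ a b c : R, a + b = b → a * c + b * c = b * c)
    {a b : R} (ha : a ≠ 0) (h : a + b = b) : b⁻¹ + a⁻¹ = a⁻¹ := by
  have hb : b ≠ 0 := by
    intro hb0; subst hb0; exact ha (lzero h)
  have h2 := hmono a b (a⁻¹ * b⁻¹) h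
  have e1 : a * (a⁻¹ * b⁻¹) = b⁻¹ := by field_simp
  have e2 : b * (a⁻¹ * b⁻¹) = a⁻¹ := by field_simp
  rwa [e1, e2] at h2

theorem mul_le_left (hmono : ∀ a b c : R, a + b = b → a * c + b * c = b * c)
    {a b : R} (c : R) (h : a + b = b) : c * a + c * b = c * b := by
  rw [mul_comm c a, mul_comm c b]; exact hmono a b c h

theorem isPM_le (hbip : ∀ a b : R, a + b = a ∨ a + b = b) {a b : R} {φ : R → R}
    (hφ : IsPM a b φ) : a + b = b := by
  obtain ⟨t, β, ht, hb0, hbt, hbc, _⟩ := hφ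
  rw [← hb0, ← hbt]
  exact chain_mono hbip (fun s hs => (hbc s hs).1) 0 t (by omega) le_rfl

theorem piece_zero (hbip : ∀ a b : R, a + b = a ∨ a + b = b) {a b p q γ : R} (hγ : γ ≠ 0) {φ : R → R} (hφ : IsPM a b φ)
    (hpq : p + q = q)
    (hbound : ∀ lam : R, p + lam = lam → lam + q = q →
      (a + γ * lam ^ (0:ℤ) = γ * lam ^ (0:ℤ)) ∧ (γ * lam ^ (0:ℤ) + b = b)) :
    WPM p q (fun lam => φ (γ * lam ^ (0:ℤ))) := by
  obtain ⟨haγ, hγb⟩ := hbound p (lrefl hbip p) hpq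
  rw [zpow_zero, mul_one] at haγ hγb
  obtain ⟨c, m, hc, he⟩ := point_mono hbip hφ haγ hγb
  refine ⟨1, fun k => if k = 0 then p else q, rfl, rfl, ?_, ?_⟩
  · intro s hs
    have : s = 0 := by omega
    subst this
    simpa using hpq
  · intro s hs
    have hs0 : s = 0 := by omega
    subst hs0
    refine ⟨c * γ ^ m, 0, mul_ne_zero hc (zpow_ne_zero m hγ), fun lam h1 h2 => ?_⟩
    simp only [zpow_zero, mul_one]
    exact he

theorem piece_pos (hbip : ∀ a b : R, a + b = a ∨ a + b = b)
    (hmono : ∀ a b c : R, a + b = b → a * c + b * c = b * c)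
    (hroot : ∀ (a : R) (n : ℕ), 1 ≤ n → ∃! b : R, b ^ n = a) {a b p q γ : R} (hγ : γ ≠ 0) {j : ℤ} (hj : 0 < j)
    {φ : R → R} (hφ : IsPM a b φ) (hpq : p + q = q)
    (hbound : ∀ lam : R, p + lam = lam → lam + q = q →
      (a + γ * lam ^ j = γ * lam ^ j) ∧ (γ * lam ^ j + b = b)) :
    WPM p q (fun lam => φ (γ * lam ^ j)) := by
  set n : ℕ := j.toNat with hn
  have hn1 : 1 ≤ n := by omega
  have hzp : ∀ x : R, x ^ j = x ^ n := by
    intro x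
    rw [show j = (n : ℤ) by omega, zpow_natCast]
  obtain ⟨hafp, hfpb⟩ := hbound p (lrefl hbip p) hpq
  obtain ⟨hafq, hfqb⟩ := hbound q hpq (lrefl hbip q)
  have hfpfq : γ * p ^ j + γ * q ^ j = γ * q ^ j := by
    rw [hzp, hzp]
    exact mul_le_left hmono γ (pow_le hbip hmono hpq n)
  have hres : WPM (γ * p ^ j) (γ * q ^ j) φ :=
    wpm_restrict hbip hφ hafp hfpfq hfqb
  obtain ⟨t, β, hβ0, hβt, hβc, hβp⟩ := hres
  -- pull back chain through the root map
  have hδ : ∀ k, (Classical.choose (hroot (β k / γ) n hn1)) ^ n = β k / γ :=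
    fun k => (Classical.choose_spec (hroot (β k / γ) n hn1)).1
  set δ : ℕ → R := fun k => Classical.choose (hroot (β k / γ) n hn1) with hδdef
  have hγδ : ∀ k, γ * (δ k) ^ n = β k := by
    intro k
    rw [hδ k, mul_div_cancel₀ _ hγ]
  refine ⟨t, δ, ?_, ?_, ?_, ?_⟩
  · have : (δ 0) ^ n = p ^ n := by
      rw [hδ 0, hβ0, hzp, mul_comm, mul_div_assoc, div_self hγ, mul_one]
    exact pow_inj hroot hn1 this
  · have : (δ t) ^ n = q ^ n := by
      rw [hδ t, hβt, hzp, mul_comm, mul_div_assoc, div_self hγ, mul_one]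
    exact pow_inj hroot hn1 this
  · intro s hs
    have h1 : β s / γ + β (s+1) / γ = β (s+1) / γ := by
      have := hmono _ _ γ⁻¹ (hβc s hs)
      simpa [div_eq_mul_inv] using this
    rw [← hδ s, ← hδ (s+1)] at h1
    exact pow_le_cancel hbip hmono hroot hn1 h1
  · intro s hs
    obtain ⟨c, m, hc, hm⟩ := hβp s hs
    refine ⟨c * γ ^ m, j * m, mul_ne_zero hc (zpow_ne_zero m hγ), fun lam h1 h2 => ?_⟩
    have hl1 : β s + γ * lam ^ j = γ * lam ^ j := by
      rw [← hγδ s, hzp]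
      exact mul_le_left hmono γ (pow_le hbip hmono h1 n)
    have hl2 : γ * lam ^ j + β (s+1) = β (s+1) := by
      rw [← hγδ (s+1), hzp]
      exact mul_le_left hmono γ (pow_le hbip hmono h2 n)
    beta_reduce
    rw [hm _ hl1 hl2, mul_zpow, ← zpow_mul]
    ring


theorem ne_zero_of_le {a b : R} (ha : a ≠ 0) (h : a + b = b) : b ≠ 0 := by
  intro hb; subst hb; exact ha (lzero h)

theorem ne_zero_of_pow {a : R} {n : ℕ} (hn : 1 ≤ n) (h : a ^ n ≠ 0) : a ≠ 0 := by
  intro h0; subst h0; exact h (zero_pow (by omega))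

theorem piece_neg (hbip : ∀ a b : R, a + b = a ∨ a + b = b)
    (hmono : ∀ a b c : R, a + b = b → a * c + b * c = b * c)
    (hroot : ∀ (a : R) (n : ℕ), 1 ≤ n → ∃! b : R, b ^ n = a)
    {a b p q γ : R} (hγ : γ ≠ 0) {j : ℤ} (hj : j < 0) (hp0 : p ≠ 0)
    {φ : R → R} (hφ : IsPM a b φ) (hpq : p + q = q)
    (hbound : ∀ lam : R, p + lam = lam → lam + q = q →
      (a + γ * lam ^ j = γ * lam ^ j) ∧ (γ * lam ^ j + b = b)) :
    WPM p q (fun lam => φ (γ * lam ^ j)) := by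
  set n : ℕ := (-j).toNat with hn
  have hn1 : 1 ≤ n := by omega
  have hzp : ∀ x : R, x ^ j = (x ^ n)⁻¹ := by
    intro x
    rw [show j = -(n : ℤ) by omega, zpow_neg, zpow_natCast]
  have hq0 : q ≠ 0 := ne_zero_of_le hp0 hpq
  have hppow : p ^ n ≠ 0 := pow_ne_zero n hp0
  have hqpow : q ^ n ≠ 0 := pow_ne_zero n hq0
  have hinv : (q ^ n)⁻¹ + (p ^ n)⁻¹ = (p ^ n)⁻¹ :=
    inv_le hmono hppow (pow_le hbip hmono hpq n)
  have hfqfp : γ * q ^ j + γ * p ^ j = γ * p ^ j := by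
    rw [hzp, hzp]; exact mul_le_left hmono γ hinv
  obtain ⟨hafp, hfpb⟩ := hbound p (lrefl hbip p) hpq
  obtain ⟨hafq, hfqb⟩ := hbound q hpq (lrefl hbip q)
  have hres : WPM (γ * q ^ j) (γ * p ^ j) φ :=
    wpm_restrict hbip hφ hafq hfqfp hfpb
  obtain ⟨t, β, hβ0, hβt, hβc, hβp⟩ := hres
  have hfq0 : γ * q ^ j ≠ 0 := by
    rw [hzp]; exact mul_ne_zero hγ (inv_ne_zero hqpow)
  have hβne : ∀ k, k ≤ t → β k ≠ 0 := by
    intro k hk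
    refine ne_zero_of_le (a := γ * q ^ j) hfq0 ?_
    rw [← hβ0]
    exact chain_mono hbip hβc 0 k (by omega) hk
  have hδ : ∀ k, (Classical.choose (hroot (γ / β (t - k)) n hn1)) ^ n = γ / β (t - k) :=
    fun k => (Classical.choose_spec (hroot (γ / β (t - k)) n hn1)).1
  set δ : ℕ → R := fun k => Classical.choose (hroot (γ / β (t - k)) n hn1) with hδdef
  have hδn0 : ∀ k, k ≤ t → δ k ^ n ≠ 0 := by
    intro k hk
    rw [hδ k]
    exact div_ne_zero hγ (hβne (t - k) (by omega))
  have hδ0 : ∀ k, k ≤ t → δ k ≠ 0 := fun k hk => ne_zero_of_pow hn1 (hδn0 k hk)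
  have hγδ : ∀ k, k ≤ t → γ * (δ k ^ n)⁻¹ = β (t - k) := by
    intro k hk
    rw [hδ k]
    field_simp
  refine ⟨t, δ, ?_, ?_, ?_, ?_⟩
  · have : δ 0 ^ n = p ^ n := by
      rw [hδ 0, Nat.sub_zero, hβt, hzp]
      rw [eq_comm, eq_div_iff (mul_ne_zero hγ (inv_ne_zero hppow))]
      field_simp
    exact pow_inj hroot hn1 this
  · have : δ t ^ n = q ^ n := by
      rw [hδ t, Nat.sub_self, hβ0, hzp]
      rw [eq_comm, eq_div_iff (mul_ne_zero hγ (inv_ne_zero hqpow))]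
      field_simp
    exact pow_inj hroot hn1 this
  · intro s hs
    have h1 : β (t - (s+1)) + β (t - s) = β (t - s) := by
      have := chain_mono hbip hβc (t - (s+1)) (t - s) (by omega) (by omega)
      exact this
    have h2 : (β (t - s))⁻¹ + (β (t - (s+1)))⁻¹ = (β (t - (s+1)))⁻¹ :=
      inv_le hmono (hβne _ (by omega)) h1
    have h3 := mul_le_left hmono γ h2
    rw [show γ * (β (t-s))⁻¹ = γ / β (t-s) from (div_eq_mul_inv _ _).symm,
      show γ * (β (t-(s+1)))⁻¹ = γ / β (t-(s+1)) from (div_eq_mul_inv _ _).symm,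
      ← hδ s, ← hδ (s+1)] at h3
    exact pow_le_cancel hbip hmono hroot hn1 h3
  · intro s hs
    obtain ⟨c, m, hc, hm⟩ := hβp (t - s - 1) (by omega)
    refine ⟨c * γ ^ m, j * m, mul_ne_zero hc (zpow_ne_zero m hγ), fun lam h1 h2 => ?_⟩
    have hlam0 : lam ≠ 0 := ne_zero_of_le (hδ0 s (by omega)) h1
    have hlampow : lam ^ n ≠ 0 := pow_ne_zero n hlam0
    -- upper bound : γ * lam ^ j ≤ β (t - s)
    have hu : γ * lam ^ j + β (t - s) = β (t - s) := by
      have e1 : δ s ^ n + lam ^ n = lam ^ n := pow_le hbip hmono h1 n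
      have e2 : (lam ^ n)⁻¹ + (δ s ^ n)⁻¹ = (δ s ^ n)⁻¹ :=
        inv_le hmono (hδn0 s (by omega)) e1
      have e3 := mul_le_left hmono γ e2
      rw [hγδ s (by omega)] at e3
      rwa [hzp]
    -- lower bound : β (t - s - 1) ≤ γ * lam ^ j
    have hl : β (t - s - 1) + γ * lam ^ j = γ * lam ^ j := by
      have e1 : lam ^ n + δ (s+1) ^ n = δ (s+1) ^ n := pow_le hbip hmono h2 n
      have e2 : (δ (s+1) ^ n)⁻¹ + (lam ^ n)⁻¹ = (lam ^ n)⁻¹ :=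
        inv_le hmono hlampow e1
      have e3 := mul_le_left hmono γ e2
      rw [hγδ (s+1) (by omega), show t - (s+1) = t - s - 1 from by omega] at e3
      rwa [hzp]
    have hupper : γ * lam ^ j + β (t - s - 1 + 1) = β (t - s - 1 + 1) := by
      rwa [show t - s - 1 + 1 = t - s from by omega]
    beta_reduce
    rw [hm _ hl hupper, mul_zpow, ← zpow_mul]
    ring

theorem piece_neg_zero (hbip : ∀ a b : R, a + b = a ∨ a + b = b)
    (hmono : ∀ a b c : R, a + b = b → a * c + b * c = b * c)
    (hroot : ∀ (a : R) (n : ℕ), 1 ≤ n → ∃! b : R, b ^ n = a)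
    {a b q γ : R} (hγ : γ ≠ 0) {j : ℤ} (hj : j < 0)
    {φ : R → R} (hφ : IsPM a b φ) (hq0 : q ≠ 0) (h0q : (0:R) + q = q)
    (hbound : ∀ lam : R, (0:R) + lam = lam → lam + q = q →
      (a + γ * lam ^ j = γ * lam ^ j) ∧ (γ * lam ^ j + b = b)) :
    WPM 0 q (fun lam => φ (γ * lam ^ j)) := by
  set n : ℕ := (-j).toNat with hn
  have hn1 : 1 ≤ n := by omega
  have hzp : ∀ x : R, x ^ j = (x ^ n)⁻¹ := by
    intro x
    rw [show j = -(n : ℤ) by omega, zpow_neg, zpow_natCast]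
  have hqpow : q ^ n ≠ 0 := pow_ne_zero n hq0
  have hfq0 : γ * q ^ j ≠ 0 := by
    rw [hzp]; exact mul_ne_zero hγ (inv_ne_zero hqpow)
  have hfqb : γ * q ^ j + b = b := (hbound q (zero_add q) (lrefl hbip q)).2
  have hbne : b ≠ 0 := ne_zero_of_le hfq0 hfqb
  have hL : (Classical.choose (hroot (γ / b) n hn1)) ^ n = γ / b :=
    (Classical.choose_spec (hroot (γ / b) n hn1)).1
  set lb : R := Classical.choose (hroot (γ / b) n hn1) with hLdef
  have hLn0 : lb ^ n ≠ 0 := by rw [hL]; exact div_ne_zero hγ hbne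
  have hL0 : lb ≠ 0 := ne_zero_of_pow hn1 hLn0
  have hγL : γ * (lb ^ n)⁻¹ = b := by rw [hL]; field_simp
  -- lb ≤ q
  have hLq : lb + q = q := by
    have e1 : b⁻¹ + (γ * q ^ j)⁻¹ = (γ * q ^ j)⁻¹ := inv_le hmono hfq0 hfqb
    have e2 := mul_le_left hmono γ e1
    have e3 : γ * (γ * q ^ j)⁻¹ = q ^ n := by
      rw [hzp]; field_simp
    rw [e3, show γ * b⁻¹ = γ / b from (div_eq_mul_inv _ _).symm, ← hL] at e2
    exact pow_le_cancel hbip hmono hroot hn1 e2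
  -- the gap property
  have gap : ∀ lam : R, lam ≠ 0 → lam + lb = lb → lam = lb := by
    intro lam hlam hle
    have hlampow : lam ^ n ≠ 0 := pow_ne_zero n hlam
    have e1 : lam ^ n + lb ^ n = lb ^ n := pow_le hbip hmono hle n
    have e2 : (lb ^ n)⁻¹ + (lam ^ n)⁻¹ = (lam ^ n)⁻¹ := inv_le hmono hlampow e1
    have e3 := mul_le_left hmono γ e2
    rw [hγL] at e3
    have e4 : γ * lam ^ j + b = b :=
      (hbound lam (zero_add lam) (ltrans hle hLq)).2
    rw [hzp] at e4
    have e5 : γ * (lam ^ n)⁻¹ = b := lantisymm e4 e3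
    have e6 : (lam ^ n)⁻¹ = (lb ^ n)⁻¹ := by
      apply mul_left_cancel₀ hγ
      rw [e5, hγL]
    have e7 : lam ^ n = lb ^ n := by
      rw [← inv_inv (lam ^ n), e6, inv_inv]
    exact pow_inj hroot hn1 e7
  have hc0 : γ * (0:R) ^ j = 0 := by
    rw [zero_zpow j (by omega), mul_zero]
  have hab : a + b = b := isPM_le hbip hφ
  have hB : φ b ≠ 0 := val_ne_zero hbip hφ hab (lrefl hbip b) hbne
  have hflb : γ * lb ^ j = b := by rw [hzp]; exact hγL
  -- part 1 : WPM 0 lb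
  have part1 : WPM 0 lb (fun lam => φ (γ * lam ^ j)) := by
    refine ⟨1, fun k => if k = 0 then 0 else lb, by simp, by simp, ?_, ?_⟩
    · intro s hs
      have : s = 0 := by omega
      subst this
      simpa using zero_add lb
    · intro s hs
      have hs0 : s = 0 := by omega
      subst hs0
      by_cases hA : φ (0:R) = 0
      · refine ⟨φ b / lb, 1, div_ne_zero hB hL0, fun lam h1 h2 => ?_⟩
        have h1' : (0:R) + lam = lam := by simpa using h1
        have h2' : lam + lb = lb := by simpa using h2
        beta_reduce
        by_cases hlam : lam = 0
        · subst hlam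
          rw [hc0, hA, zpow_one, mul_zero]
        · rw [gap lam hlam h2', hflb, zpow_one, div_mul_cancel₀ _ hL0]
      · -- collapsed semifield case
        have hL1 : lb = 1 := by
          rcases ltotal hbip lb 1 with h | h
          · have h2 : lb * lb + 1 * lb = 1 * lb := hmono _ _ lb h
            rw [one_mul] at h2
            have h3 : lb * lb = lb := gap (lb * lb) (mul_ne_zero hL0 hL0) h2
            calc lb = lb * lb * lb⁻¹ := by field_simp
            _ = lb * lb⁻¹ := by rw [h3]
            _ = 1 := by field_simp
          · exact (gap 1 one_ne_zero h).symm
        have hbγ : b = γ := by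
          rw [← hγL, hL1, one_pow, inv_one, mul_one]
        have hall : ∀ x : R, x ≠ 0 → x = 1 := by
          intro x hx
          rcases ltotal hbip x 1 with h | h
          · rw [← hL1] at h
            rw [gap x hx h, hL1]
          · have h2 : x⁻¹ + 1 = 1 := by
              have := inv_le hmono one_ne_zero h
              rwa [inv_one] at this
            rw [← hL1] at h2
            have h3 : x⁻¹ = lb := gap x⁻¹ (inv_ne_zero hx) h2
            rw [← inv_inv x, h3, hL1, inv_one]
        have hb1 : b = 1 := hall b hbne
        -- show φ 0 = φ b
        have hAB : φ (0:R) = φ b := by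
          obtain ⟨t2, β2, ht2, hb20, hb2t, hb2c, hb2p⟩ := hφ
          have ha0 : a = 0 := by
            have := (hbound 0 (by rw [add_zero]) h0q).1
            rw [hc0] at this
            exact lzero this
          obtain ⟨k, hk, hk1, hk2⟩ := find_piece hbip ht2 (fun s hs => (hb2c s hs).1)
            (x := 0) (by rw [hb20, ha0, add_zero]) (by rw [zero_add])
          obtain ⟨c, m, hc, hm⟩ := hb2p k hk
          have hval0 : φ 0 = c * (0:R) ^ m := hm 0 hk1 hk2
          have hm0 : m = 0 := by
            by_contra hm0
            rw [zero_zpow m hm0, mul_zero] at hval0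
            exact hA hval0
          subst hm0
          rw [zpow_zero, mul_one] at hval0
          have hβk0 : β2 k = 0 := lzero hk1
          have hβk1 : β2 (k+1) = 1 := by
            apply hall
            intro hzero
            exact (hb2c k hk).2 (by rw [hβk0, hzero])
          have hvalb : φ (β2 (k+1)) = c * (β2 (k+1)) ^ (0:ℤ) :=
            hm (β2 (k+1)) ((hb2c k hk).1) (lrefl hbip _)
          rw [zpow_zero, mul_one] at hvalb
          rw [hval0, hb1, ← hβk1, hvalb]
        refine ⟨φ (0:R), 0, hA, fun lam h1 h2 => ?_⟩
        have h2' : lam + lb = lb := by simpa using h2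
        beta_reduce
        rw [zpow_zero, mul_one]
        by_cases hlam : lam = 0
        · subst hlam
          rw [hc0]
        · rw [gap lam hlam h2', hflb, ← hAB]
  -- part 2 : WPM lb q
  by_cases hlbq : lb = q
  · rw [← hlbq]
    exact part1
  · refine wpm_glue part1 (piece_neg hbip hmono hroot hγ hj hL0 hφ hLq ?_)
    intro lam h1 h2
    exact hbound lam (zero_add lam) h2

theorem piece_any (hbip : ∀ a b : R, a + b = a ∨ a + b = b)
    (hmono : ∀ a b c : R, a + b = b → a * c + b * c = b * c)
    (hroot : ∀ (a : R) (n : ℕ), 1 ≤ n → ∃! b : R, b ^ n = a)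
    {a b p q γ : R} (hγ : γ ≠ 0) {j : ℤ}
    {φ : R → R} (hφ : IsPM a b φ) (hpq : p + q = q) (hne : p ≠ q)
    (hbound : ∀ lam : R, p + lam = lam → lam + q = q →
      (a + γ * lam ^ j = γ * lam ^ j) ∧ (γ * lam ^ j + b = b)) :
    WPM p q (fun lam => φ (γ * lam ^ j)) := by
  rcases lt_trichotomy j 0 with h | h | h
  · by_cases hp0 : p = 0
    · subst hp0
      exact piece_neg_zero hbip hmono hroot hγ h hφ (Ne.symm hne) hpq hbound
    · exact piece_neg hbip hmono hroot hγ h hp0 hφ hpq hbound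
  · subst h
    exact piece_zero hbip hγ hφ hpq hbound
  · exact piece_pos hbip hmono hroot hγ h hφ hpq hbound

end PMAux

/-- If `f : [u,v] → R` is piecewise monomial with image inside `[ρ, σ]`, and
`φ` is piecewise monomial on an interval `[a, b]` containing `[ρ, σ]`, then
`φ ∘ f` is piecewise monomial on `[u, v]`. -/
theorem stmt10 {R : Type*} [Semifield R]
    (hbip : ∀ a b : R, a + b = a ∨ a + b = b)
    (hmono : ∀ a b c : R, a + b = b → a * c + b * c = b * c)
    (hroot : ∀ (a : R) (n : ℕ), 1 ≤ n → ∃! b : R, b ^ n = a)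
    (u v ρ σ a b : R) (f φ : R → R)
    (hf : IsPM u v f)
    (him : ∀ lam : R, u + lam = lam → lam + v = v →
      ρ + f lam = f lam ∧ f lam + σ = σ)
    (haρ : a + ρ = ρ) (hσb : σ + b = b)
    (hφ : IsPM a b φ) :
    IsPM u v (fun lam => φ (f lam)) := by
  open PMAux in
  obtain ⟨r, α, hr, hα0, hαr, hαc, hαp⟩ := hf
  have hchain : ∀ s < r, α s + α (s + 1) = α (s + 1) := fun s hs => (hαc s hs).1
  have hne : u ≠ v := by
    intro huv
    have h1 : α 0 + α 1 = α 1 := (hαc 0 hr).1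
    have hne1 : α 0 ≠ α 1 := (hαc 0 hr).2
    have h2 : α 1 + α r = α r := chain_mono hbip hchain 1 r hr le_rfl
    rw [hαr, ← huv, ← hα0] at h2
    exact hne1 (lantisymm h1 h2)
  apply wpm_isPM _ hne
  have main : ∀ s, s ≤ r → WPM u (α s) (fun lam => φ (f lam)) := by
    intro s
    induction s with
    | zero =>
      intro _
      rw [hα0]
      exact wpm_refl u _
    | succ k ih =>
      intro hk
      refine wpm_glue (ih (by omega)) ?_
      obtain ⟨γ, j, hγ, hm⟩ := hαp k (by omega)
      have hsub : ∀ lam : R, α k + lam = lam → lam + α (k + 1) = α (k + 1) →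
          (u + lam = lam ∧ lam + v = v) := by
        intro lam h1 h2
        constructor
        · refine ltrans ?_ h1
          rw [← hα0]
          exact chain_mono hbip hchain 0 k (by omega) (by omega)
        · refine ltrans h2 ?_
          rw [← hαr]
          exact chain_mono hbip hchain (k + 1) r (by omega) (by omega)
      have hpiece := piece_any hbip hmono hroot hγ hφ ((hαc k (by omega)).1)
        ((hαc k (by omega)).2) (fun lam h1 h2 => by
          obtain ⟨hu', hv'⟩ := hsub lam h1 h2
          obtain ⟨hρ', hσ'⟩ := him lam hu' hv'
          rw [hm lam h1 h2] at hρ' hσ'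
          exact ⟨ltrans haρ hρ', ltrans hσ' hσb⟩)
      exact wpm_congr hbip hpiece
        (fun lam h1 h2 => congrArg φ (hm lam h1 h2).symm)
  have := main r le_rfl
  rwa [hαr] at this
end

section
/- Let w = λ₁w₁ + ⋯ + λ_r w_r with w_i ∈ V∖{0}, λ_i nonzero scalars, and set α_i = q(λ_i w_i)/q(w). Then each α_i ≤ e and for every x ∈ V∖{0}: CS(w, x) = Σ_{i=1}^r α_i · CS(w_i, x). -/
/-- If `w = λ₁w₁ + ⋯ + λ_r w_r` with `w_i ≠ 0` and nonzero scalars `λ_i`, and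
`α_i = q(λ_i w_i)/q(w)`, then each `α_i ≤ e = 1` (i.e. `α_i + 1 = 1`) and
`CS(w, x) = Σ α_i CS(w_i, x)` for every `x ≠ 0`, where
`CS(x,y) = b(x,y)²/(q(x)q(y))`. -/
theorem stmt12 {R V : Type*} [Semifield R] [AddCommMonoid V] [Module R V]
    (hbip : ∀ a b : R, a + b = a ∨ a + b = b)
    (q : V → R) (b : V → V → R)
    (hq : ∀ (c : R) (x : V), q (c • x) = c ^ 2 * q x)
    (hbl : ∀ (c : R) (x y : V), b (c • x) y = c * b x y)
    (hba : ∀ x y z : V, b (x + y) z = b x z + b y z)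
    (hbs : ∀ x y : V, b x y = b y x)
    (hcomp : ∀ x y : V, q (x + y) = q x + q y + b x y)
    (haniso : ∀ x : V, x ≠ 0 → q x ≠ 0)
    (r : ℕ) (w : V) (wi : Fin r → V) (lam : Fin r → R)
    (hw : w = ∑ i, lam i • wi i) (hw0 : w ≠ 0)
    (hwi : ∀ i, wi i ≠ 0) (hlam : ∀ i, lam i ≠ 0) :
    (∀ i, q (lam i • wi i) / q w + 1 = 1) ∧
    (∀ x : V, x ≠ 0 →
      b w x ^ 2 / (q w * q x) =
        ∑ i, q (lam i • wi i) / q w * (b (wi i) x ^ 2 / (q (wi i) * q x))) := by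
  have hidem : ∀ a : R, a + a = a := fun a => (hbip a a).elim id id
  have hqw : q w ≠ 0 := haniso w hw0
  -- if a ≤ b (i.e. a + b = b) then a² + b² = b²
  have key : ∀ a c : R, a + c = c → a ^ 2 + c ^ 2 = c ^ 2 := by
    intro a c h
    have h1 : a * c + c * c = c * c := by rw [← add_mul, h]
    have h2 : a * a + a * c = a * c := by rw [← mul_add, h]
    calc a ^ 2 + c ^ 2 = a * a + (a * c + c * c) := by rw [h1]; ring
      _ = (a * a + a * c) + c * c := by ring
      _ = a * c + c * c := by rw [h2]
      _ = c ^ 2 := by rw [h1]; ring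
  have hpair : ∀ a c : R, (a + c) ^ 2 = a ^ 2 + c ^ 2 := by
    intro a c
    rcases hbip a c with h | h
    · rw [h]
      rw [add_comm] at h
      rw [add_comm (a^2), key c a h]
    · rw [h, key a c h]
  -- squares distribute over sums
  have hsqsum : ∀ (s : Finset (Fin r)) (f : Fin r → R),
      (∑ i ∈ s, f i) ^ 2 = ∑ i ∈ s, (f i) ^ 2 := by
    intro s f
    induction s using Finset.induction with
    | empty => simp
    | insert _ _ hni ih => rw [Finset.sum_insert hni, Finset.sum_insert hni, hpair, ih]
  -- each q(λᵢwᵢ) ≤ q w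
  have hle : ∀ i, q (lam i • wi i) + q w = q w := by
    intro i
    have hsplit : w = lam i • wi i + ∑ j ∈ Finset.univ.erase i, lam j • wi j := by
      rw [hw]
      exact (Finset.add_sum_erase _ (fun j => lam j • wi j) (Finset.mem_univ i)).symm
    calc q (lam i • wi i) + q w
        = q (lam i • wi i) + (q (lam i • wi i) +
            (q (∑ j ∈ Finset.univ.erase i, lam j • wi j) +
             b (lam i • wi i) (∑ j ∈ Finset.univ.erase i, lam j • wi j))) := by
          rw [hsplit, hcomp]; ring_nf
      _ = (q (lam i • wi i) + q (lam i • wi i)) +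
            (q (∑ j ∈ Finset.univ.erase i, lam j • wi j) +
             b (lam i • wi i) (∑ j ∈ Finset.univ.erase i, lam j • wi j)) := by ring
      _ = q w := by rw [hidem, hsplit, hcomp]; ring
  constructor
  · intro i
    rw [← div_self hqw, ← add_div, hle i, div_self hqw]
  · intro x hx
    have hqx : q x ≠ 0 := haniso x hx
    have hb0 : b 0 x = 0 := by
      have := hbl 0 x x
      simpa using this
    have hbsum : b w x = ∑ i, lam i * b (wi i) x := by
      rw [hw]
      rw [show (∑ i, lam i * b (wi i) x) = ∑ i, b (lam i • wi i) x from
        Finset.sum_congr rfl fun i _ => (hbl _ _ _).symm]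
      induction (Finset.univ : Finset (Fin r)) using Finset.induction with
      | empty => simpa using hb0
      | insert _ _ hni ih => rw [Finset.sum_insert hni, Finset.sum_insert hni, hba, ih]
    rw [hbsum, hsqsum, Finset.sum_div]
    refine Finset.sum_congr rfl fun i _ => ?_
    have hqi : q (wi i) ≠ 0 := haniso _ (hwi i)
    rw [hq, mul_pow]
    field_simp
end

section
/- Let R be a bipotent semifield, V an R-module with anisotropic quadratic pair (q,b), and ε₁, ε₂, ε₃ ∈ V∖{0} with q(ε₁) = 0, b(ε₁,ε₂) > 0, b(ε₁,ε₃) = 0. Let η ∈ V satisfy b(ε₁,η) > 0 or q(η) > 0, and b(η,ε₃) = 0. Then for every t > 0 the function λ ↦ CS(ε₁ + tη, ε₂ + λε₃) equals (α₁₂² + t²b(η,ε₂)²)/((tb(ε₁,η) + t²q(η)) · q(ε₂ + λε₃)), i.e., a positive constant (depending on t) times 1/q(ε₂ + λε₃); in particular its monotonicity profile in λ is independent of t and η. -/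
/-- With `q(ε₁) = 0`, `b(ε₁,ε₂) > 0`, `b(ε₁,ε₃) = 0`, `b(η,ε₃) = 0` and
`b(ε₁,η) > 0` or `q(η) > 0`, for every `t > 0` the function
`λ ↦ CS(ε₁ + tη, ε₂ + λε₃)` equals
`(b(ε₁,ε₂)² + t²b(η,ε₂)²) / ((t·b(ε₁,η) + t²·q(η)) · q(ε₂ + λε₃))`,
i.e. a positive constant (depending on `t`) times `1/q(ε₂ + λε₃)`; in
particular its profile in `λ` is independent of `t` and `η`. -/
theorem stmt19 {R V : Type*} [Semifield R] [AddCommMonoid V] [Module R V]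
    (hbip : ∀ a b : R, a + b = a ∨ a + b = b)
    (q : V → R) (b : V → V → R)
    (hq2 : ∀ (c : R) (x : V), q (c • x) = c ^ 2 * q x)
    (hbl : ∀ (c : R) (x y : V), b (c • x) y = c * b x y)
    (hba : ∀ x y z : V, b (x + y) z = b x z + b y z)
    (hbs : ∀ x y : V, b x y = b y x)
    (hcomp : ∀ x y : V, q (x + y) = q x + q y + b x y)
    (ε₁ ε₂ ε₃ η : V)
    (h1 : q ε₁ = 0) (h12 : b ε₁ ε₂ ≠ 0) (h13 : b ε₁ ε₃ = 0)
    (hη : b ε₁ η ≠ 0 ∨ q η ≠ 0) (hη3 : b η ε₃ = 0)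
    (h2 : ∀ lam : R, q (ε₂ + lam • ε₃) ≠ 0) :
    ∀ t : R, t ≠ 0 →
      (∀ lam : R,
        b (ε₁ + t • η) (ε₂ + lam • ε₃) ^ 2 /
            (q (ε₁ + t • η) * q (ε₂ + lam • ε₃)) =
          (b ε₁ ε₂ ^ 2 + t ^ 2 * b η ε₂ ^ 2) /
            ((t * b ε₁ η + t ^ 2 * q η) * q (ε₂ + lam • ε₃))) ∧
      ∃ c : R, c ≠ 0 ∧ ∀ lam : R,
        b (ε₁ + t • η) (ε₂ + lam • ε₃) ^ 2 /
            (q (ε₁ + t • η) * q (ε₂ + lam • ε₃)) =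
          c * (q (ε₂ + lam • ε₃))⁻¹ := by
  -- addition with a nonzero element is nonzero
  have hsum_ne : ∀ a c : R, a ≠ 0 → a + c ≠ 0 := by
    intro a c ha h
    rcases hbip a c with h' | h'
    · exact ha (h'.symm.trans h)
    · have hc : c = 0 := h'.symm.trans h
      rw [hc, add_zero] at h
      exact ha h
  have hsum_ne' : ∀ a c : R, a ≠ 0 → c + a ≠ 0 := by
    intro a c ha
    rw [add_comm]; exact hsum_ne a c ha
  -- squares behave well under bipotent addition
  have key : ∀ a c : R, a + c = a → a ^ 2 + c ^ 2 = a ^ 2 := by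
    intro a c h
    rcases hbip (a ^ 2) (c ^ 2) with h2 | h2
    · exact h2
    · have hca : c * a + c ^ 2 = c * a := by rw [pow_two, ← mul_add, h]
      have hac : a ^ 2 + a * c = a ^ 2 := by rw [pow_two, ← mul_add, h]
      have e1 : a ^ 2 = c * a := by
        calc a ^ 2 = a ^ 2 + a * c := hac.symm
          _ = a ^ 2 + c * a := by rw [mul_comm a c]
          _ = a ^ 2 + (c * a + c ^ 2) := by rw [hca]
          _ = (a ^ 2 + c ^ 2) + c * a := by ring
          _ = c ^ 2 + c * a := by rw [h2]
          _ = c * a + c ^ 2 := by rw [add_comm]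
          _ = c * a := hca
      have e2 : a ^ 2 = c ^ 2 := by
        calc a ^ 2 = c * a := e1
          _ = c * a + c ^ 2 := hca.symm
          _ = a ^ 2 + c ^ 2 := by rw [e1]
          _ = c ^ 2 := h2
      rw [h2]; exact e2.symm
  have hsq : ∀ a c : R, (a + c) ^ 2 = a ^ 2 + c ^ 2 := by
    intro a c
    rcases hbip a c with h | h
    · rw [h, key a c h]
    · rw [h, add_comm (a ^ 2), key c a (by rw [add_comm]; exact h)]
  -- bilinearity in the second argument
  have hba' : ∀ x y z : V, b x (y + z) = b x y + b x z := by
    intro x y z; rw [hbs, hba, hbs y x, hbs z x]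
  have hbl' : ∀ (c : R) (x y : V), b x (c • y) = c * b x y := by
    intro c x y; rw [hbs, hbl, hbs]
  -- key expansions
  have hB : ∀ t lam : R, b (ε₁ + t • η) (ε₂ + lam • ε₃) = b ε₁ ε₂ + t * b η ε₂ := by
    intro t lam
    simp only [hba, hba', hbl, hbl', h13, hη3, mul_zero, add_zero]
  have hQ1 : ∀ t : R, q (ε₁ + t • η) = t * b ε₁ η + t ^ 2 * q η := by
    intro t
    rw [hcomp, h1, hq2, hbl']
    ring
  intro t ht
  have hfirst : ∀ lam : R,
      b (ε₁ + t • η) (ε₂ + lam • ε₃) ^ 2 /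
          (q (ε₁ + t • η) * q (ε₂ + lam • ε₃)) =
        (b ε₁ ε₂ ^ 2 + t ^ 2 * b η ε₂ ^ 2) /
          ((t * b ε₁ η + t ^ 2 * q η) * q (ε₂ + lam • ε₃)) := by
    intro lam
    rw [hB, hQ1, hsq, mul_pow]
  refine ⟨hfirst, (b ε₁ ε₂ ^ 2 + t ^ 2 * b η ε₂ ^ 2) / (t * b ε₁ η + t ^ 2 * q η),
    ?_, ?_⟩
  · have hnum : b ε₁ ε₂ ^ 2 + t ^ 2 * b η ε₂ ^ 2 ≠ 0 :=
      hsum_ne _ _ (pow_ne_zero 2 h12)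
    have hden : t * b ε₁ η + t ^ 2 * q η ≠ 0 := by
      rcases hη with h | h
      · exact hsum_ne _ _ (mul_ne_zero ht h)
      · exact hsum_ne' _ _ (mul_ne_zero (pow_ne_zero 2 ht) h)
    exact div_ne_zero hnum hden
  · intro lam
    rw [hfirst lam, div_eq_mul_inv, mul_inv, ← mul_assoc, ← div_eq_mul_inv,
      div_eq_mul_inv, div_eq_mul_inv]
end
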